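/- arXiv:2311.00761 — 2 statements merged into one kernel-verified Lean document; each statement's English description precedes it below -/
import Mathlib

section
/- For all γ, δ < ω₁ there exists an infinite M ⊆ ℕ such that every E ∈ S_{γ+δ} can be written as E = F_1 ∪ ⋯ ∪ F_k with F_1 < ⋯ < F_k nonempty members of S_γ satisfying {M(min F_1), …, M(min F_k)} ∈ S_δ. -/
noncomputable section

open Filter Set

namespace SchreierPaper

/-- `ω₁`, the first uncountable ordinal. -/
def omega1 : Ordinal := (Cardinal.aleph 1).ord

/-- `E < F` for finite sets of naturals: every element of `E` is smaller than
every element of `F` (this agrees with `max E < min F` under the conventions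
`max ∅ = 0`, `min ∅ = ∞`). -/
def BlockLt (E F : Finset ℕ) : Prop := ∀ i ∈ E, ∀ j ∈ F, i < j

/-- A Schreier system: the hierarchy of Schreier families `S ξ` of finite sets of
positive integers, together with the fixed choice `limSeq` of cofinal sequences at
countable limit ordinals used in the recursive definition. -/
structure SchreierSystem where
  S : Ordinal → Set (Finset ℕ)
  limSeq : Ordinal → ℕ → Ordinal
  zero_def : S 0 = {E : Finset ℕ | E = ∅ ∨ ∃ n : ℕ, 0 < n ∧ E = {n}}
  succ_def : ∀ ξ : Ordinal,
    S (ξ + 1) = {E : Finset ℕ | E = ∅ ∨ ∃ (k : ℕ) (Es : Fin k → Finset ℕ), 0 < k ∧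
      (∀ i, (Es i).Nonempty ∧ Es i ∈ S ξ) ∧
      (∀ i j : Fin k, i < j → BlockLt (Es i) (Es j)) ∧
      (∀ m ∈ E, k ≤ m) ∧ E = Finset.univ.biUnion Es}
  limSeq_lt : ∀ ξ : Ordinal, ξ < omega1 → Order.IsSuccLimit ξ → ∀ n : ℕ, limSeq ξ n < ξ
  limSeq_strictMono : ∀ ξ : Ordinal, ξ < omega1 → Order.IsSuccLimit ξ → StrictMono (limSeq ξ)
  limSeq_cofinal : ∀ ξ : Ordinal, ξ < omega1 → Order.IsSuccLimit ξ → ∀ β < ξ, ∃ n : ℕ, β ≤ limSeq ξ n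
  limSeq_nested : ∀ ξ : Ordinal, ξ < omega1 → Order.IsSuccLimit ξ →
    ∀ n : ℕ, S (limSeq ξ n + 1) ⊆ S (limSeq ξ (n + 1))
  lim_def : ∀ ξ : Ordinal, ξ < omega1 → Order.IsSuccLimit ξ →
    S ξ = {E : Finset ℕ | E = ∅ ∨ (E.Nonempty ∧ ∃ n : ℕ, (∀ m ∈ E, n ≤ m) ∧
      E ∈ S (limSeq ξ n + 1))}

/-- The Schreier norm `‖x‖_ξ` of a finitely supported sequence. -/
def schreierNorm (SS : SchreierSystem) (ξ : Ordinal) (x : ℕ →₀ ℝ) : ℝ :=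
  sSup {c : ℝ | ∃ E ∈ SS.S ξ, c = ∑ i ∈ E, |x i|}

/-- The action of a finitely supported functional (coefficients with respect to the
coordinate functionals) on a finitely supported vector. -/
def pairing (g x : ℕ →₀ ℝ) : ℝ := g.sum fun j c => c * x j

/-- The dual norm of `X_ξ^*` on finitely supported functionals. -/
def dualNorm (SS : SchreierSystem) (ξ : Ordinal) (g : ℕ →₀ ℝ) : ℝ :=
  sSup {c : ℝ | ∃ x : ℕ →₀ ℝ, schreierNorm SS ξ x ≤ 1 ∧ c = |pairing g x|}

/-- The canonical unit vector `e_n` (also used for the coordinate functional `f_n`). -/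
def unitVec (n : ℕ) : ℕ →₀ ℝ := Finsupp.single n 1

/-- A block sequence: nonzero, finitely supported, supported on positive integers,
with successive supports. -/
def IsBlockSeq (x : ℕ → ℕ →₀ ℝ) : Prop :=
  (∀ i, x i ≠ 0) ∧ (∀ i, ∀ a ∈ (x i).support, 0 < a) ∧
    ∀ i, BlockLt (x i).support (x (i + 1)).support

/-- A normalized block sequence in the Schreier space `X_ξ`. -/
def IsNormalizedBlockSeq (SS : SchreierSystem) (ξ : Ordinal) (x : ℕ → ℕ →₀ ℝ) : Prop :=
  IsBlockSeq x ∧ ∀ i, schreierNorm SS ξ (x i) = 1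

/-- A normalized block sequence in the dual space `X_ξ^*`. -/
def IsNormalizedDualBlockSeq (SS : SchreierSystem) (ξ : Ordinal) (x : ℕ → ℕ →₀ ℝ) : Prop :=
  IsBlockSeq x ∧ ∀ i, dualNorm SS ξ (x i) = 1

/-- The linear combination `∑ a_i u_i` for finitely supported scalars `a`. -/
def combo (u : ℕ → ℕ →₀ ℝ) (a : ℕ →₀ ℝ) : ℕ →₀ ℝ := a.sum fun i c => c • u i

/-- Equivalence of two sequences with respect to two (norm) functions. -/
def SeqEquiv (N₁ : (ℕ →₀ ℝ) → ℝ) (u : ℕ → ℕ →₀ ℝ)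
    (N₂ : (ℕ →₀ ℝ) → ℝ) (v : ℕ → ℕ →₀ ℝ) : Prop :=
  ∃ C : ℝ, 1 ≤ C ∧ ∀ a : ℕ →₀ ℝ,
    C⁻¹ * N₂ (combo v a) ≤ N₁ (combo u a) ∧ N₁ (combo u a) ≤ C * N₂ (combo v a)

/-- A `ϱ`-Schreier pair `((x_i), (x*_i))` in `X_ξ × X_ξ^*`. -/
def IsSchreierPair (SS : SchreierSystem) (ξ ϱ : Ordinal) (x xs : ℕ → ℕ →₀ ℝ) : Prop :=
  IsNormalizedBlockSeq SS ξ x ∧ IsNormalizedDualBlockSeq SS ξ xs ∧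
  (∀ i j, i ≠ j → pairing (xs i) (x j) = 0) ∧
  (∀ i, pairing (xs i) (x i) = ∑ j ∈ (xs i).support, |xs i j| * |x i j|) ∧
  (∃ δ : ℝ, 0 < δ ∧ ∀ i, δ ≤ pairing (xs i) (x i)) ∧
  (∃ J : ℕ → ℕ, StrictMono J ∧ (∀ i, 0 < J i) ∧
    SeqEquiv (schreierNorm SS ξ) x (schreierNorm SS ϱ) (fun i => unitVec (J i)) ∧
    SeqEquiv (dualNorm SS ξ) xs (dualNorm SS ϱ) (fun i => unitVec (J i))) ∧
  (∃ C : ℝ, ∀ n : ℕ, ∀ y : ℕ →₀ ℝ,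
    schreierNorm SS ξ (∑ i ∈ Finset.range n, pairing (xs i) y • x i) ≤ C * schreierNorm SS ξ y)

/-- `I(ξ)`: the set of partial sums of the Cantor normal form of `ξ`, characterized as
the ordinals `ι ≤ ξ` that are minimal among the ordinals `ι'` with `ι' + (ξ - ι) = ξ`. -/
def IOrd (ξ : Ordinal) : Set Ordinal :=
  {ι | ι ≤ ξ ∧ ∀ ι' : Ordinal, ι' + (ξ - ι) = ξ → ι ≤ ι'}

/-- `R(ξ) = {ξ - ι : ι ≤ ξ}`: the set of ordinals `ϱ` such that `ι + ϱ = ξ` for some `ι`. -/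
def ROrd (ξ : Ordinal) : Set Ordinal := {ϱ | ∃ ι : Ordinal, ι + ϱ = ξ}

/-- The family `A_n[S_γ]` of unions of at most `n` successive members of `S γ`. -/
def AnS (SS : SchreierSystem) (n : ℕ) (γ : Ordinal) : Set (Finset ℕ) :=
  {E : Finset ℕ | E = ∅ ∨ ∃ (k : ℕ) (Es : Fin k → Finset ℕ), 0 < k ∧ k ≤ n ∧
    (∀ i, (Es i).Nonempty ∧ Es i ∈ SS.S γ) ∧
    (∀ i j : Fin k, i < j → BlockLt (Es i) (Es j)) ∧ E = Finset.univ.biUnion Es}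

/-- The `⊆`-maximal members of a family of finite sets. -/
def MAXf (F : Set (Finset ℕ)) : Set (Finset ℕ) := {E | E ∈ F ∧ ∀ G ∈ F, E ⊆ G → E = G}

/-- `T_ε x*`: the part of a functional with coefficients of absolute value `> ε`. -/
def Ttrunc (ε : ℝ) (g : ℕ →₀ ℝ) : ℕ →₀ ℝ :=
  haveI := Classical.decPred fun j : ℕ => ε < |g j|
  g.filter fun j => ε < |g j|

/-- `R_ε x*`: the part of a functional with coefficients of absolute value `≤ ε`. -/
def Rtrunc (ε : ℝ) (g : ℕ →₀ ℝ) : ℕ →₀ ℝ :=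
  haveI := Classical.decPred fun j : ℕ => |g j| ≤ ε
  g.filter fun j => |g j| ≤ ε

/-- A `ξ`-flat block sequence of functionals:
`inf_{ε>0} limsup_i ‖R_ε y*_i‖ > 0`. -/
def XiFlat (SS : SchreierSystem) (ξ : Ordinal) (y : ℕ → ℕ →₀ ℝ) : Prop :=
  ∃ δ : ℝ, 0 < δ ∧ ∀ ε : ℝ, 0 < ε →
    δ ≤ Filter.limsup (fun i => dualNorm SS ξ (Rtrunc ε (y i))) Filter.atTop

/-- An `ι`-approachable block sequence of functionals. -/
def Approachable (SS : SchreierSystem) (ι : Ordinal) (y : ℕ → ℕ →₀ ℝ) : Prop :=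
  ∃ ϑ : ℝ, 0 < ϑ ∧ ∀ β < ι, ∀ n j : ℕ, ∃ i > j,
    (Ttrunc ϑ (y i)).support ∉ (AnS SS n β \ MAXf (AnS SS n β))

/-- Auxiliary recursion: given the "first average" operation `G` on infinite sets,
produce the sequence of successive averages, each taken on the set with all the
previous supports removed. -/
def iterAvg (G : Set ℕ → (ℕ →₀ ℝ)) (M : Set ℕ) : ℕ → (ℕ →₀ ℝ) := fun n =>
  Nat.strongRec (fun n prev =>
    G (M \ ⋃ (i : ℕ) (h : i < n), ((prev i h).support : Set ℕ))) n

/-- The repeated averages hierarchy `𝕊^ξ_{M,n}` (with `n` running from `0`). -/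
def RA (SS : SchreierSystem) (ξ : Ordinal) : Set ℕ → ℕ → (ℕ →₀ ℝ) :=
  Ordinal.limitRecOn (motive := fun _ => Set ℕ → ℕ → (ℕ →₀ ℝ)) ξ
    (fun M n => Finsupp.single (Nat.nth (· ∈ M) n) (1 : ℝ))
    (fun _ ih M => iterAvg
      (fun N => ((sInf N : ℕ) : ℝ)⁻¹ • ∑ j ∈ Finset.range (sInf N), ih N j) M)
    (fun ξ _ ih M => iterAvg
      (fun N => if h : SS.limSeq ξ (sInf N) + 1 < ξ then ih _ h N 0 else 0) M)

/-- The modified Schreier families `S^M_ξ`, defined with the same fixed cofinal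
sequences as the given Schreier system. -/
def SMod (SS : SchreierSystem) (ξ : Ordinal) : Set (Finset ℕ) :=
  Ordinal.limitRecOn (motive := fun _ => Set (Finset ℕ)) ξ
    {E : Finset ℕ | E = ∅ ∨ ∃ n : ℕ, 0 < n ∧ E = {n}}
    (fun _ ih => {E : Finset ℕ | E = ∅ ∨ ∃ (k : ℕ) (Es : Fin k → Finset ℕ), 0 < k ∧
      (∀ i, (Es i).Nonempty ∧ Es i ∈ ih ∧ ∀ m ∈ Es i, k ≤ m) ∧
      (∀ i j : Fin k, i ≠ j → Disjoint (Es i) (Es j)) ∧ E = Finset.univ.biUnion Es})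
    (fun ξ _ ih => {E : Finset ℕ | E = ∅ ∨ (E.Nonempty ∧ ∃ n : ℕ, (∀ m ∈ E, n ≤ m) ∧
      ∃ h : SS.limSeq ξ n + 1 < ξ, E ∈ ih _ h)})

/-- `τ_ξ(A)`: the least number of successive members of `S ξ` whose union is `A`. -/
def tau (SS : SchreierSystem) (ξ : Ordinal) (A : Finset ℕ) : ℕ :=
  sInf {k : ℕ | ∃ Fs : Fin k → Finset ℕ, (∀ i, Fs i ∈ SS.S ξ) ∧
    (∀ i j : Fin k, i < j → BlockLt (Fs i) (Fs j)) ∧ A = Finset.univ.biUnion Fs}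

/-- A map `ψ` defined on an infinite set `L` is `ξ`-injective if
`sup_{F ∈ S ξ} τ_ξ(ψ⁻¹(F)) < ∞` (in particular all these preimages are finite). -/
def XiInjective (SS : SchreierSystem) (ξ : Ordinal) (L : Set ℕ) (ψ : ℕ → ℕ) : Prop :=
  ∃ C : ℕ, ∀ F ∈ SS.S ξ, ∃ A : Finset ℕ, (↑A = {x ∈ L | ψ x ∈ F}) ∧ tau SS ξ A ≤ C

/-- The sum of the indicator functionals of a finite set. -/
def indicatorFs (s : Finset ℕ) : ℕ →₀ ℝ := ∑ j ∈ s, Finsupp.single j 1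

section Operators

variable {X Y : Type*} [NormedAddCommGroup X] [NormedSpace ℝ X]
  [NormedAddCommGroup Y] [NormedSpace ℝ Y]

/-- A strictly singular operator. -/
def StrictlySingular (T : X →L[ℝ] Y) : Prop :=
  ∀ ε : ℝ, 0 < ε → ∀ Z : Submodule ℝ X, ¬ FiniteDimensional ℝ Z →
    ∃ x ∈ Z, ‖x‖ = 1 ∧ ‖T x‖ < ε

/-- A basic sequence in a normed space. -/
def IsBasicSeq (x : ℕ → X) : Prop :=
  (∀ i, x i ≠ 0) ∧ ∃ K : ℝ, ∀ m n : ℕ, m ≤ n → ∀ a : ℕ → ℝ,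
    ‖∑ i ∈ Finset.range m, a i • x i‖ ≤ K * ‖∑ i ∈ Finset.range n, a i • x i‖

/-- An `S_ϱ`-strictly singular operator. -/
def SSsingular (SS : SchreierSystem) (ϱ : Ordinal) (T : X →L[ℝ] Y) : Prop :=
  ∀ ε : ℝ, 0 < ε → ∀ x : ℕ → X, IsBasicSeq x →
    ∃ F ∈ SS.S ϱ, ∃ v ∈ Submodule.span ℝ {w : X | ∃ i ∈ F, w = x i},
      ‖v‖ = 1 ∧ ‖T v‖ < ε

/-- A compact operator: the image of the unit ball is relatively compact. -/
def CompactOp (T : X →L[ℝ] Y) : Prop :=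
  IsCompact (closure (⇑T '' Metric.closedBall 0 1))

/-- A finitely strictly singular operator. -/
def FinitelyStrictlySingular (T : X →L[ℝ] Y) : Prop :=
  ∀ ε : ℝ, 0 < ε → ∃ n : ℕ, ∀ E : Submodule ℝ X, FiniteDimensional ℝ E →
    Module.finrank ℝ E = n → ∃ x ∈ E, ‖x‖ = 1 ∧ ‖T x‖ < ε

/-- A closed operator ideal on a Banach space: a norm-closed linear subspace of the
bounded operators, stable under two-sided composition with bounded operators. -/
def IsClosedOperatorIdeal (I : Set (X →L[ℝ] X)) : Prop :=
  IsClosed I ∧ (0 : X →L[ℝ] X) ∈ I ∧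
  (∀ S T : X →L[ℝ] X, S ∈ I → T ∈ I → S + T ∈ I) ∧
  (∀ (c : ℝ) (T : X →L[ℝ] X), T ∈ I → c • T ∈ I) ∧
  (∀ A B : X →L[ℝ] X, ∀ T ∈ I, A.comp (T.comp B) ∈ I)

end Operators


/-! ### Auxiliary lemmas for Statement 11 -/

section Statement11Aux

open Ordinal in
lemma add_lt_omega1' {γ δ : Ordinal} (hγ : γ < omega1) (hδ : δ < omega1) :
    γ + δ < omega1 := by
  rw [omega1, Cardinal.lt_ord] at *
  rw [Ordinal.card_add]
  rw [← Cardinal.succ_aleph0, Order.lt_succ_iff] at *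
  calc γ.card + δ.card ≤ Cardinal.aleph0 + Cardinal.aleph0 := add_le_add hγ hδ
    _ = Cardinal.aleph0 := Cardinal.aleph0_add_aleph0

/-- All elements of members of a Schreier family are positive. -/
lemma pos_of_mem_S (SS : SchreierSystem) :
    ∀ ξ, ξ < omega1 → ∀ E ∈ SS.S ξ, ∀ m ∈ E, 0 < m := by
  intro ξ
  induction ξ using Ordinal.induction with
  | h ξ IH =>
    intro hξ E hE m hm
    rcases Ordinal.zero_or_succ_or_isSuccLimit ξ with rfl | ⟨ξ', rfl⟩ | hlim
    · rw [SS.zero_def] at hE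
      rcases hE with rfl | ⟨n, hn, rfl⟩
      · exact absurd hm (Finset.notMem_empty m)
      · rwa [Finset.mem_singleton.mp hm]
    · rw [← Ordinal.add_one_eq_succ, SS.succ_def ξ'] at hE
      rcases hE with rfl | ⟨k, Es, hk, hEs, _, _, rfl⟩
      · exact absurd hm (Finset.notMem_empty m)
      · obtain ⟨i, _, hi⟩ := Finset.mem_biUnion.mp hm
        exact IH ξ' (Order.lt_succ ξ') ((Order.lt_succ ξ').trans hξ) _ (hEs i).2 m hi
    · rw [SS.lim_def ξ hξ hlim] at hE
      rcases hE with rfl | ⟨_, n, _, hE'⟩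
      · exact absurd hm (Finset.notMem_empty m)
      · have hlt : SS.limSeq ξ n + 1 < ξ := by
          rw [Ordinal.add_one_eq_succ]
          exact hlim.succ_lt (SS.limSeq_lt ξ hξ hlim n)
        exact IH _ hlt (hlt.trans hξ) _ hE' m hm

lemma mem_S_succ_of_mem (SS : SchreierSystem) {ξ : Ordinal} (hξ : ξ < omega1)
    {E : Finset ℕ} (hE : E ∈ SS.S ξ) : E ∈ SS.S (ξ + 1) := by
  rw [SS.succ_def]
  rcases eq_or_ne E ∅ with rfl | hne
  · exact Or.inl rfl
  refine Or.inr ⟨1, fun _ => E, one_pos, fun _ => ⟨Finset.nonempty_of_ne_empty hne, hE⟩,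
    fun i j hij => absurd (Subsingleton.elim i j ▸ hij) (lt_irrefl _),
    fun m hm => pos_of_mem_S SS ξ hξ E hE m hm, ?_⟩
  ext x
  simp [Finset.mem_biUnion]

lemma limSeq_chain (SS : SchreierSystem) {ξ : Ordinal} (hξ : ξ < omega1)
    (hlim : Order.IsSuccLimit ξ) {a b : ℕ} (hab : a ≤ b) :
    SS.S (SS.limSeq ξ a + 1) ⊆ SS.S (SS.limSeq ξ b + 1) := by
  induction b, hab using Nat.le_induction with
  | base => exact subset_rfl
  | succ b hab ih =>
      refine ih.trans ((SS.limSeq_nested ξ hξ hlim b).trans ?_)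
      intro E hE
      exact mem_S_succ_of_mem SS ((SS.limSeq_lt ξ hξ hlim (b + 1)).trans hξ) hE

/-- Almost monotonicity of Schreier families: membership transfers to larger
families provided the minimum is large enough. -/
lemma S_almost_mono (SS : SchreierSystem) :
    ∀ ζ, ζ < omega1 → ∀ β ≤ ζ, ∃ N : ℕ, ∀ E ∈ SS.S β,
      (∀ m ∈ E, N ≤ m) → E ∈ SS.S ζ := by
  intro ζ
  induction ζ using Ordinal.induction with
  | h ζ IH =>
  intro hζ β hβ
  rcases eq_or_lt_of_le hβ with rfl | hβlt
  · exact ⟨0, fun E hE _ => hE⟩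
  rcases Ordinal.zero_or_succ_or_isSuccLimit ζ with rfl | ⟨ζ', rfl⟩ | hlim
  · exact absurd hβlt (by simp)
  · have hζ' : ζ' < omega1 := (Order.lt_succ ζ').trans hζ
    obtain ⟨N, hN⟩ := IH ζ' (Order.lt_succ ζ') hζ' β (Order.lt_succ_iff.mp hβlt)
    refine ⟨N, fun E hE hmin => ?_⟩
    rw [← Ordinal.add_one_eq_succ]
    exact mem_S_succ_of_mem SS hζ' (hN E hE hmin)
  · obtain ⟨n, hn⟩ := SS.limSeq_cofinal ζ hζ hlim β hβlt
    have hlt : SS.limSeq ζ n + 1 < ζ := by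
      rw [Ordinal.add_one_eq_succ]
      exact hlim.succ_lt (SS.limSeq_lt ζ hζ hlim n)
    obtain ⟨N, hN⟩ := IH _ hlt (hlt.trans hζ) β (hn.trans (le_self_add))
    refine ⟨max N n, fun E hE hmin => ?_⟩
    rw [SS.lim_def ζ hζ hlim]
    rcases eq_or_ne E ∅ with rfl | hne
    · exact Or.inl rfl
    · exact Or.inr ⟨Finset.nonempty_of_ne_empty hne, n,
        fun m hm => le_trans (le_max_right _ _) (hmin m hm),
        hN E hE fun m hm => le_trans (le_max_left _ _) (hmin m hm)⟩

/-- Schreier families are spreading. -/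
lemma spread_mem_S (SS : SchreierSystem) :
    ∀ ξ, ξ < omega1 → ∀ E ∈ SS.S ξ, ∀ f : ℕ → ℕ,
      Set.InjOn f ↑E → StrictMonoOn f ↑E → (∀ e ∈ E, e ≤ f e) →
      E.image f ∈ SS.S ξ := by
  intro ξ
  induction ξ using Ordinal.induction with
  | h ξ IH =>
  intro hξ E hE f _ hmono hle
  rcases Ordinal.zero_or_succ_or_isSuccLimit ξ with rfl | ⟨ξ', rfl⟩ | hlim
  · rw [SS.zero_def] at hE ⊢
    rcases hE with rfl | ⟨n, hn, rfl⟩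
    · exact Or.inl (by simp)
    · exact Or.inr ⟨f n, lt_of_lt_of_le hn (hle n (by simp)), by simp⟩
  · rw [← Ordinal.add_one_eq_succ, SS.succ_def ξ'] at hE ⊢
    have hξ' : ξ' < omega1 := (Order.lt_succ ξ').trans hξ
    rcases hE with rfl | ⟨k, Es, hk, hEs, hblk, hmin, rfl⟩
    · exact Or.inl (by simp)
    refine Or.inr ⟨k, fun i => (Es i).image f, hk, fun i => ⟨(hEs i).1.image f, ?_⟩,
      ?_, ?_, ?_⟩
    · have hsub : (Es i : Set ℕ) ⊆ ((Finset.univ.biUnion Es : Finset ℕ) : Set ℕ) := by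
        intro x hx
        exact Finset.mem_coe.mpr (Finset.mem_biUnion.mpr ⟨i, Finset.mem_univ i, hx⟩)
      exact IH ξ' (Order.lt_succ ξ') hξ' _ (hEs i).2 f
        ((hmono.injOn).mono hsub) (hmono.mono hsub)
        (fun e he => hle e (Finset.mem_biUnion.mpr ⟨i, Finset.mem_univ i, he⟩))
    · intro i j hij a ha b hb
      obtain ⟨x, hx, rfl⟩ := Finset.mem_image.mp ha
      obtain ⟨y, hy, rfl⟩ := Finset.mem_image.mp hb
      have hxE : x ∈ Finset.univ.biUnion Es :=
        Finset.mem_biUnion.mpr ⟨i, Finset.mem_univ i, hx⟩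
      have hyE : y ∈ Finset.univ.biUnion Es :=
        Finset.mem_biUnion.mpr ⟨j, Finset.mem_univ j, hy⟩
      exact hmono hxE hyE (hblk i j hij x hx y hy)
    · intro m hm
      obtain ⟨x, hx, rfl⟩ := Finset.mem_image.mp hm
      exact le_trans (hmin x hx) (hle x hx)
    · ext x
      simp only [Finset.mem_image, Finset.mem_biUnion, Finset.mem_univ, true_and]
      constructor
      · rintro ⟨y, ⟨i, hi⟩, rfl⟩
        exact ⟨i, y, hi, rfl⟩
      · rintro ⟨i, y, hy, rfl⟩
        exact ⟨y, ⟨i, hy⟩, rfl⟩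
  · rw [SS.lim_def ξ hξ hlim] at hE ⊢
    rcases hE with rfl | ⟨hne, n, hmin, hE'⟩
    · exact Or.inl (by simp)
    have hlt : SS.limSeq ξ n + 1 < ξ := by
      rw [Ordinal.add_one_eq_succ]
      exact hlim.succ_lt (SS.limSeq_lt ξ hξ hlim n)
    refine Or.inr ⟨hne.image f, n, ?_, IH _ hlt (hlt.trans hξ) _ hE' f
      hmono.injOn hmono hle⟩
    intro m hm
    obtain ⟨x, hx, rfl⟩ := Finset.mem_image.mp hm
    exact le_trans (hmin x hx) (hle x hx)

lemma nth_range_of_strictMono {m : ℕ → ℕ} (hm : StrictMono m) (j : ℕ) :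
    Nat.nth (· ∈ Set.range m) j = m j := by
  classical
  have hinf : {x | x ∈ Set.range m}.Infinite := by
    have : {x | x ∈ Set.range m} = Set.range m := rfl
    rw [this]
    exact Set.infinite_range_of_injective hm.injective
  have hp : (fun x => x ∈ Set.range m) (m j) := ⟨j, rfl⟩
  have hc : Nat.count (· ∈ Set.range m) (m j) = j := by
    rw [Nat.count_eq_card_filter_range]
    have heq : (Finset.range (m j)).filter (· ∈ Set.range m)
        = (Finset.range j).image m := by
      ext x
      simp only [Finset.mem_filter, Finset.mem_image, Finset.mem_range, Set.mem_range]
      constructor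
      · rintro ⟨hx, i, rfl⟩
        exact ⟨i, hm.lt_iff_lt.mp hx, rfl⟩
      · rintro ⟨i, hi, rfl⟩
        exact ⟨hm hi, i, rfl⟩
    rw [heq, Finset.card_image_of_injective _ hm.injective, Finset.card_range]
  conv_lhs => rw [← hc]
  exact Nat.nth_count hp

lemma nth_ge_succ_of_pos {M : Set ℕ} (hM : M.Infinite) (hpos : ∀ x ∈ M, 0 < x)
    (j : ℕ) : j + 1 ≤ Nat.nth (· ∈ M) j := by
  have hinf : {x | x ∈ M}.Infinite := hM
  induction j with
  | zero => exact hpos _ (Nat.nth_mem_of_infinite hinf 0)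
  | succ j ih =>
      have := Nat.nth_lt_nth hinf (k := j) (n := j + 1) |>.mpr (Nat.lt_succ_self j)
      omega

lemma sInf_coe_finset {F : Finset ℕ} (h : F.Nonempty) :
    sInf (F : Set ℕ) = F.min' h := by
  apply le_antisymm
  · exact Nat.sInf_le (Finset.mem_coe.mpr (F.min'_mem h))
  · exact F.min'_le _ (Nat.sInf_mem (h.to_set))

lemma sInf_mem_finset {F : Finset ℕ} (h : F.Nonempty) : sInf (F : Set ℕ) ∈ F :=
  Nat.sInf_mem (h.to_set)

/-- Key intermediate form of Statement 11, with the decomposition as a list. -/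
lemma key_statement11 (SS : SchreierSystem) (γ : Ordinal) (hγ : γ < omega1) :
    ∀ δ, δ < omega1 → ∃ M : Set ℕ, M.Infinite ∧ (∀ m ∈ M, 0 < m) ∧
      ∀ E ∈ SS.S (γ + δ), E.Nonempty →
        ∃ P : List (Finset ℕ), P ≠ [] ∧ (∀ F ∈ P, F.Nonempty ∧ F ∈ SS.S γ) ∧
          P.Pairwise BlockLt ∧ (∀ x, x ∈ E ↔ ∃ F ∈ P, x ∈ F) ∧
          (P.map fun F : Finset ℕ => Nat.nth (· ∈ M) (sInf (F : Set ℕ) - 1)).toFinset ∈ SS.S δ := by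
  intro δ
  induction δ using Ordinal.induction with
  | h δ IH =>
  intro hδ
  rcases Ordinal.zero_or_succ_or_isSuccLimit δ with rfl | ⟨β, rfl⟩ | hlim
  -- case δ = 0
  · refine ⟨{x | 0 < x}, Set.Ioi_infinite 0, fun m hm => hm, ?_⟩
    intro E hE hEne
    rw [add_zero] at hE
    refine ⟨[E], by simp, by simpa using ⟨hEne, hE⟩, List.pairwise_singleton _ _, by simp, ?_⟩
    rw [SS.zero_def]
    refine Or.inr ⟨Nat.nth (· ∈ {x : ℕ | 0 < x}) (sInf (E : Set ℕ) - 1), ?_, by simp⟩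
    exact Nat.nth_mem_of_infinite (Set.Ioi_infinite 0) _
  -- case δ = succ β
  · have hβ : β < omega1 := (Order.lt_succ β).trans hδ
    have hγβ : γ + β < omega1 := add_lt_omega1' hγ hβ
    obtain ⟨M, hMinf, hMpos, hMdec⟩ := IH β (Order.lt_succ β) hβ
    refine ⟨M, hMinf, hMpos, ?_⟩
    intro E hE hEne
    rw [Ordinal.add_succ, ← Ordinal.add_one_eq_succ, SS.succ_def] at hE
    rcases hE with rfl | ⟨k, Es, hk, hEs, hblk, hminE, rfl⟩
    · exact absurd rfl (Finset.nonempty_iff_ne_empty.mp hEne)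
    choose P hP1 hP2 hP3 hP4 hP5 using fun i => hMdec (Es i) (hEs i).2 (hEs i).1
    have hFE : ∀ i, ∀ F ∈ P i, ∀ a ∈ F, a ∈ Es i :=
      fun i F hF a ha => (hP4 i a).mpr ⟨F, hF, ha⟩
    have hposE : ∀ i, ∀ a ∈ Es i, 0 < a := fun i => pos_of_mem_S SS _ hγβ _ (hEs i).2
    have hinfS : ∀ i, ∀ F ∈ P i, sInf (F : Set ℕ) ∈ Es i :=
      fun i F hF => hFE i F hF _ (sInf_mem_finset (hP2 i F hF).1)
    have hnth_ge : ∀ i, ∀ F ∈ P i,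
        sInf (F : Set ℕ) ≤ Nat.nth (· ∈ M) (sInf (F : Set ℕ) - 1) := by
      intro i F hF
      have h1 : 0 < sInf (F : Set ℕ) := hposE i _ (hinfS i F hF)
      have := nth_ge_succ_of_pos hMinf hMpos (sInf (F : Set ℕ) - 1)
      omega
    have hnth_lt : ∀ i j, i < j → ∀ F ∈ P i, ∀ G ∈ P j,
        Nat.nth (· ∈ M) (sInf (F : Set ℕ) - 1) < Nat.nth (· ∈ M) (sInf (G : Set ℕ) - 1) := by
      intro i j hij F hF G hG
      have h1 : 0 < sInf (F : Set ℕ) := hposE i _ (hinfS i F hF)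
      have h2 : sInf (F : Set ℕ) < sInf (G : Set ℕ) :=
        hblk i j hij _ (hinfS i F hF) _ (hinfS j G hG)
      exact (Nat.nth_lt_nth hMinf).mpr (by omega)
    refine ⟨(List.ofFn P).flatten, ?_, ?_, ?_, ?_, ?_⟩
    · intro h
      rw [List.flatten_eq_nil_iff] at h
      exact hP1 ⟨0, hk⟩ (h _ (List.mem_ofFn.mpr ⟨⟨0, hk⟩, rfl⟩))
    · intro F hF
      obtain ⟨l, hl, hFl⟩ := List.mem_flatten.mp hF
      obtain ⟨i, rfl⟩ := List.mem_ofFn.mp hl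
      exact hP2 i F hFl
    · rw [List.pairwise_flatten]
      constructor
      · intro l hl
        obtain ⟨i, rfl⟩ := List.mem_ofFn.mp hl
        exact hP3 i
      · rw [List.pairwise_ofFn]
        intro i j hij F hF G hG a ha b hb
        exact hblk i j hij a (hFE i F hF a ha) b (hFE j G hG b hb)
    · intro x
      rw [Finset.mem_biUnion]
      constructor
      · rintro ⟨i, _, hx⟩
        obtain ⟨F, hF, hxF⟩ := (hP4 i x).mp hx
        exact ⟨F, List.mem_flatten.mpr ⟨P i, List.mem_ofFn.mpr ⟨i, rfl⟩, hF⟩, hxF⟩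
      · rintro ⟨F, hF, hx⟩
        obtain ⟨l, hl, hFl⟩ := List.mem_flatten.mp hF
        obtain ⟨i, rfl⟩ := List.mem_ofFn.mp hl
        exact ⟨i, Finset.mem_univ i, (hP4 i x).mpr ⟨F, hFl, hx⟩⟩
    · rw [← Ordinal.add_one_eq_succ, SS.succ_def]
      refine Or.inr ⟨k, fun i =>
        ((P i).map fun F : Finset ℕ => Nat.nth (· ∈ M) (sInf (F : Set ℕ) - 1)).toFinset,
        hk, fun i => ⟨?_, hP5 i⟩, ?_, ?_, ?_⟩
      · obtain ⟨F, hF⟩ := List.exists_mem_of_ne_nil _ (hP1 i)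
        exact ⟨_, List.mem_toFinset.mpr (List.mem_map.mpr ⟨F, hF, rfl⟩)⟩
      · intro i j hij a ha b hb
        obtain ⟨F, hF, rfl⟩ := List.mem_map.mp (List.mem_toFinset.mp ha)
        obtain ⟨G, hG, rfl⟩ := List.mem_map.mp (List.mem_toFinset.mp hb)
        exact hnth_lt i j hij F hF G hG
      · intro m hm
        obtain ⟨F, hF, rfl⟩ := List.mem_map.mp (List.mem_toFinset.mp hm)
        obtain ⟨l, hl, hFl⟩ := List.mem_flatten.mp hF
        obtain ⟨i, rfl⟩ := List.mem_ofFn.mp hl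
        have h1 : k ≤ sInf (F : Set ℕ) :=
          hminE _ (Finset.mem_biUnion.mpr ⟨i, Finset.mem_univ i, hinfS i F hFl⟩)
        exact h1.trans (hnth_ge i F hFl)
      · ext x
        simp only [List.mem_toFinset, List.mem_map, List.mem_flatten, List.mem_ofFn,
          Finset.mem_biUnion, Finset.mem_univ, true_and, Set.mem_range]
        constructor
        · rintro ⟨F, ⟨l, ⟨i, rfl⟩, hFl⟩, rfl⟩
          exact ⟨i, F, hFl, rfl⟩
        · rintro ⟨i, F, hF, rfl⟩
          exact ⟨F, ⟨P i, ⟨i, rfl⟩, hF⟩, rfl⟩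
  -- case δ limit
  · classical
    have hγδ : γ + δ < omega1 := add_lt_omega1' hγ hδ
    have hγδlim : Order.IsSuccLimit (γ + δ) := Ordinal.isSuccLimit_add γ hlim
    have hγlt : γ < γ + δ := (lt_add_iff_pos_right γ).mpr hlim.pos
    obtain ⟨n₀, hn₀⟩ := SS.limSeq_cofinal (γ + δ) hγδ hγδlim γ hγlt
    have hγle : ∀ n : ℕ, γ ≤ SS.limSeq (γ + δ) (max n n₀) := fun n =>
      hn₀.trans ((SS.limSeq_strictMono (γ + δ) hγδ hγδlim).monotone (le_max_right n n₀))
    set η : ℕ → Ordinal := fun n => (SS.limSeq (γ + δ) (max n n₀) + 1) - γ with hηdef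
    have heq : ∀ n, γ + η n = SS.limSeq (γ + δ) (max n n₀) + 1 := fun n =>
      Ordinal.add_sub_cancel_of_le ((hγle n).trans (le_self_add))
    have hζlt : ∀ n, SS.limSeq (γ + δ) (max n n₀) + 1 < γ + δ := by
      intro n
      rw [Ordinal.add_one_eq_succ]
      exact hγδlim.succ_lt (SS.limSeq_lt (γ + δ) hγδ hγδlim _)
    have hηδ : ∀ n, η n < δ := fun n =>
      (add_lt_add_iff_left γ).mp (by rw [heq n]; exact hζlt n)
    have hηω : ∀ n, η n < omega1 := fun n => (hηδ n).trans hδ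
    choose M' hM'inf hM'pos hM'dec using fun n : ℕ => IH (η n) (hηδ n) (hηω n)
    choose q hq using fun n : ℕ => SS.limSeq_cofinal δ hδ hlim (η n) (hηδ n)
    have hδq : ∀ n, SS.limSeq δ (q n) + 1 < omega1 := by
      intro n
      refine lt_trans ?_ hδ
      rw [Ordinal.add_one_eq_succ]
      exact hlim.succ_lt (SS.limSeq_lt δ hδ hlim (q n))
    choose N hN using fun n : ℕ => S_almost_mono SS (SS.limSeq δ (q n) + 1) (hδq n)
      (η n) ((hq n).trans (le_self_add))
    set B : ℕ → ℕ := fun n => max (N n) (q n) with hBdef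
    set base : ℕ → ℕ := fun j =>
      max ((Finset.range (j + 2)).sup fun n => max (Nat.nth (· ∈ M' n) j) (B n)) 1 with hbase
    set mf : ℕ → ℕ :=
      fun j => Nat.rec (base 0) (fun j prev => max (prev + 1) (base (j + 1))) j with hmf
    have hmf0 : mf 0 = base 0 := by simp only [hmf]; rfl
    have hmfs : ∀ j, mf (j + 1) = max (mf j + 1) (base (j + 1)) := by
      intro j; simp only [hmf]
    have hmono : StrictMono mf := strictMono_nat_of_lt_succ fun j => by
      rw [hmfs j]
      exact lt_of_lt_of_le (Nat.lt_succ_self _) (le_max_left _ _)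
    have hmfbase : ∀ j, base j ≤ mf j := by
      intro j
      cases j with
      | zero => exact le_of_eq hmf0.symm
      | succ j => rw [hmfs j]; exact le_max_right _ _
    have hbase_ge : ∀ j n, n ≤ j + 1 → max (Nat.nth (· ∈ M' n) j) (B n) ≤ base j := by
      intro j n hn
      simp only [hbase]
      have hmem : n ∈ Finset.range (j + 2) := Finset.mem_range.mpr (by omega)
      exact le_trans (Finset.le_sup (f := fun n => max (Nat.nth (· ∈ M' n) j) (B n)) hmem) (le_max_left _ _)
    have hmf_nth : ∀ j n, n ≤ j + 1 → Nat.nth (· ∈ M' n) j ≤ mf j :=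
      fun j n hn => le_trans (le_trans (le_max_left _ _) (hbase_ge j n hn)) (hmfbase j)
    have hmf_B : ∀ j n, n ≤ j + 1 → B n ≤ mf j :=
      fun j n hn => le_trans (le_trans (le_max_right _ _) (hbase_ge j n hn)) (hmfbase j)
    have hmf_pos : ∀ j, 0 < mf j := by
      intro j
      refine lt_of_lt_of_le one_pos (le_trans ?_ (hmfbase j))
      simp only [hbase]
      exact le_max_right _ 1
    have hrangeinf : {x | x ∈ Set.range mf}.Infinite :=
      Set.infinite_range_of_injective hmono.injective
    have hnthM : ∀ j, Nat.nth (· ∈ Set.range mf) j = mf j := nth_range_of_strictMono hmono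
    refine ⟨Set.range mf, Set.infinite_range_of_injective hmono.injective, ?_, ?_⟩
    · rintro m ⟨j, rfl⟩
      exact hmf_pos j
    intro E hE hEne
    rw [SS.lim_def (γ + δ) hγδ hγδlim] at hE
    rcases hE with rfl | ⟨-, n, hminE, hE'⟩
    · exact absurd rfl (Finset.nonempty_iff_ne_empty.mp hEne)
    have hE2 : E ∈ SS.S (γ + η n) := by
      rw [heq n]
      exact limSeq_chain SS hγδ hγδlim (le_max_left n n₀) hE'
    obtain ⟨P, hP1, hP2, hP3, hP4, hP5⟩ := hM'dec n E hE2 hEne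
    refine ⟨P, hP1, hP2, hP3, hP4, ?_⟩
    have hposE : ∀ a ∈ E, 0 < a :=
      pos_of_mem_S SS _ (add_lt_omega1' hγ (hηω n)) _ hE2
    have hFP : ∀ F ∈ P, sInf (F : Set ℕ) ∈ E :=
      fun F hF => (hP4 _).mpr ⟨F, hF, sInf_mem_finset (hP2 F hF).1⟩
    have hsize : ∀ F ∈ P, n ≤ sInf (F : Set ℕ) ∧ 0 < sInf (F : Set ℕ) :=
      fun F hF => ⟨hminE _ (hFP F hF), hposE _ (hFP F hF)⟩
    set f : ℕ → ℕ := fun x => Nat.nth (· ∈ Set.range mf) (Nat.count (· ∈ M' n) x) with hf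
    set G' : Finset ℕ :=
      (P.map fun F : Finset ℕ => Nat.nth (· ∈ M' n) (sInf (F : Set ℕ) - 1)).toFinset with hG'
    have hG'mem : ∀ x ∈ G', ∃ F ∈ P, Nat.nth (· ∈ M' n) (sInf (F : Set ℕ) - 1) = x := by
      intro x hx
      rw [hG', List.mem_toFinset, List.mem_map] at hx
      exact hx
    have hG'S : G' ∈ SS.S (η n) := hP5
    have hfval : ∀ F ∈ P, f (Nat.nth (· ∈ M' n) (sInf (F : Set ℕ) - 1))
        = Nat.nth (· ∈ Set.range mf) (sInf (F : Set ℕ) - 1) := by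
      intro F hF
      rw [hf]
      simp only
      rw [Nat.count_nth_of_infinite (p := fun x => x ∈ M' n) (hM'inf n)]
    have hGeq : (P.map fun F : Finset ℕ =>
          Nat.nth (· ∈ Set.range mf) (sInf (F : Set ℕ) - 1)).toFinset = G'.image f := by
      ext x
      rw [hG']
      simp only [List.mem_toFinset, List.mem_map, Finset.mem_image]
      constructor
      · rintro ⟨F, hF, rfl⟩
        exact ⟨Nat.nth (· ∈ M' n) (sInf (F : Set ℕ) - 1), ⟨F, hF, rfl⟩, hfval F hF⟩
      · rintro ⟨y, ⟨F, hF, rfl⟩, rfl⟩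
        exact ⟨F, hF, (hfval F hF).symm⟩
    have hmonoOn : StrictMonoOn f (↑G' : Set ℕ) := by
      intro x hx y hy hxy
      obtain ⟨F, hF, rfl⟩ := hG'mem x (Finset.mem_coe.mp hx)
      have hxM : (fun z => z ∈ M' n) (Nat.nth (· ∈ M' n) (sInf (F : Set ℕ) - 1)) :=
        Nat.nth_mem_of_infinite (hM'inf n) _
      exact (Nat.nth_lt_nth hrangeinf).mpr (Nat.count_strict_mono hxM hxy)
    have hdom : ∀ e ∈ G', e ≤ f e := by
      intro e he
      obtain ⟨F, hF, rfl⟩ := hG'mem e he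
      rw [hfval F hF, hnthM]
      exact hmf_nth _ n (by have := hsize F hF; omega)
    have hGS : (P.map fun F : Finset ℕ =>
        Nat.nth (· ∈ Set.range mf) (sInf (F : Set ℕ) - 1)).toFinset ∈ SS.S (η n) := by
      rw [hGeq]
      exact spread_mem_S SS (η n) (hηω n) G' hG'S f hmonoOn.injOn hmonoOn hdom
    have hGmin : ∀ x ∈ (P.map fun F : Finset ℕ =>
        Nat.nth (· ∈ Set.range mf) (sInf (F : Set ℕ) - 1)).toFinset, B n ≤ x := by
      intro x hx
      obtain ⟨F, hF, rfl⟩ := List.mem_map.mp (List.mem_toFinset.mp hx)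
      rw [hnthM]
      exact hmf_B _ n (by have := hsize F hF; omega)
    have hGS2 := hN n _ hGS fun m hm =>
      le_trans (le_max_left _ _) (hGmin m hm)
    rw [SS.lim_def δ hδ hlim]
    refine Or.inr ⟨?_, q n, fun m hm => le_trans (le_max_right _ _) (hGmin m hm), hGS2⟩
    obtain ⟨F, hF⟩ := List.exists_mem_of_ne_nil _ hP1
    exact ⟨_, List.mem_toFinset.mpr (List.mem_map.mpr ⟨F, hF, rfl⟩)⟩

end Statement11Aux

/-- Proposition `combinatorics` (iv) of the paper. For all
`γ, δ < ω₁` there is an infinite `M` such that every nonempty `E ∈ S_{γ+δ}` splits as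
`E = F_1 ∪ ⋯ ∪ F_k` with `F_1 < ⋯ < F_k` nonempty members of `S_γ` and
`{M(min F_1), …, M(min F_k)} ∈ S_δ`. (Here `Nat.nth (· ∈ M) (j - 1)` is the `j`-th
smallest element `M(j)` of `M`.) -/
theorem statement11 (SS : SchreierSystem) (γ δ : Ordinal) (hγ : γ < omega1)
    (hδ : δ < omega1) :
    ∃ M : Set ℕ, M.Infinite ∧ (∀ m ∈ M, 0 < m) ∧
      ∀ E ∈ SS.S (γ + δ), E.Nonempty →
        ∃ (k : ℕ) (Fs : Fin k → Finset ℕ) (hne : ∀ i, (Fs i).Nonempty),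
          (∀ i, Fs i ∈ SS.S γ) ∧ (∀ i j : Fin k, i < j → BlockLt (Fs i) (Fs j)) ∧
          E = Finset.univ.biUnion Fs ∧
          (Finset.univ.image fun i =>
              Nat.nth (· ∈ M) ((Fs i).min' (hne i) - 1)) ∈ SS.S δ := by
  obtain ⟨M, hMinf, hMpos, hMdec⟩ := key_statement11 SS γ hγ δ hδ
  refine ⟨M, hMinf, hMpos, ?_⟩
  intro E hE hEne
  obtain ⟨P, hPne, hPmem, hPpair, hPchar, hPimg⟩ := hMdec E hE hEne
  refine ⟨P.length, fun i => P.get i, fun i => (hPmem _ (P.get_mem i)).1,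
    fun i => (hPmem _ (P.get_mem i)).2, ?_, ?_, ?_⟩
  · intro i j hij
    exact List.pairwise_iff_get.mp hPpair i j hij
  · ext x
    rw [hPchar x, Finset.mem_biUnion]
    constructor
    · rintro ⟨F, hF, hx⟩
      obtain ⟨i, rfl⟩ := List.mem_iff_get.mp hF
      exact ⟨i, Finset.mem_univ i, hx⟩
    · rintro ⟨i, _, hx⟩
      exact ⟨P.get i, P.get_mem i, hx⟩
  · have himg : (Finset.univ.image fun i =>
        Nat.nth (· ∈ M) ((P.get i).min' ((hPmem _ (P.get_mem i)).1) - 1))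
        = (P.map fun F : Finset ℕ => Nat.nth (· ∈ M) (sInf (F : Set ℕ) - 1)).toFinset := by
      ext x
      rw [Finset.mem_image, List.mem_toFinset, List.mem_map]
      constructor
      · rintro ⟨i, _, rfl⟩
        refine ⟨P.get i, P.get_mem i, ?_⟩
        rw [sInf_coe_finset ((hPmem _ (P.get_mem i)).1)]
      · rintro ⟨F, hF, rfl⟩
        obtain ⟨i, rfl⟩ := List.mem_iff_get.mp hF
        refine ⟨i, Finset.mem_univ i, ?_⟩
        rw [sInf_coe_finset ((hPmem _ (P.get_mem i)).1)]
    rw [himg]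
    exact hPimg

end SchreierPaper
end
end

section
/- For every ξ < ω₁ and every infinite M ⊆ ℕ there is a unique sequence E_1 < E_2 < ⋯ of members of MAX(S_ξ) with M = ⋃_{n=1}^∞ E_n; moreover supp(S^ξ_{M,n}) = E_n for every n ∈ ℕ. -/
noncomputable section

open Filter Set

namespace SchreierPaper

/-! ### Auxiliary machinery for Statement 13 -/

section Aux13

/-- Union of a list of finsets. -/
def UL (L : List (Finset ℕ)) : Finset ℕ := L.foldr (· ∪ ·) ∅

@[simp] lemma UL_nil : UL [] = ∅ := rfl
@[simp] lemma UL_cons (F : Finset ℕ) (L : List (Finset ℕ)) : UL (F :: L) = F ∪ UL L := rfl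

lemma mem_UL {L : List (Finset ℕ)} {x : ℕ} : x ∈ UL L ↔ ∃ F ∈ L, x ∈ F := by
  induction L with
  | nil => simp
  | cons F L ih => simp [Finset.mem_union, ih]

lemma UL_append (L₁ L₂ : List (Finset ℕ)) : UL (L₁ ++ L₂) = UL L₁ ∪ UL L₂ := by
  induction L₁ with
  | nil => simp
  | cons F L ih => simp [ih, Finset.union_assoc]

lemma blockLt_trans {A B C : Finset ℕ} (h1 : BlockLt A B) (h2 : BlockLt B C)
    (hB : B.Nonempty) : BlockLt A C := fun i hi j hj =>
  (h1 i hi _ hB.choose_spec).trans (h2 _ hB.choose_spec j hj)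

lemma blockLt_mono {A B A' B' : Finset ℕ} (h : BlockLt A B) (hA : A' ⊆ A) (hB : B' ⊆ B) :
    BlockLt A' B' := fun i hi j hj => h i (hA hi) j (hB hj)

lemma blockLt_disj {A B : Finset ℕ} (h : BlockLt A B) : Disjoint A B :=
  Finset.disjoint_left.2 fun {a} ha hb => absurd (h _ ha _ hb) (lt_irrefl a)

lemma chain'_pairwise : ∀ {L : List (Finset ℕ)}, (∀ F ∈ L, F.Nonempty) →
    L.Chain' BlockLt → L.Pairwise BlockLt := by
  intro L
  induction L with
  | nil => intro _ _; exact List.Pairwise.nil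
  | cons F L ih =>
    intro hne hc
    have hp := ih (fun G hG => hne G (by simp [hG])) hc.tail
    refine List.pairwise_cons.2 ⟨?_, hp⟩
    intro G hG
    cases L with
    | nil => simp at hG
    | cons H L' =>
      have hFH : BlockLt F H := (List.isChain_cons_cons.1 hc).1
      rcases List.mem_cons.1 hG with rfl | hG'
      · exact hFH
      · exact blockLt_trans hFH ((List.pairwise_cons.1 hp).1 G hG') (hne H (by simp))

lemma omega1_isLimit : Order.IsSuccLimit omega1 := Cardinal.isSuccLimit_ord (Cardinal.aleph0_le_aleph 1)

lemma succ_lt_omega1 {ξ : Ordinal} (h : ξ < omega1) : ξ + 1 < omega1 := by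
  rw [Ordinal.add_one_eq_succ]; exact omega1_isLimit.succ_lt h

variable {SS : SchreierSystem}

lemma S_succ_of_list {ξ : Ordinal} {L : List (Finset ℕ)}
    (hF : ∀ F ∈ L, F.Nonempty ∧ F ∈ SS.S ξ) (hp : L.Pairwise BlockLt)
    (hk : ∀ m ∈ UL L, L.length ≤ m) : UL L ∈ SS.S (ξ + 1) := by
  rw [SS.succ_def]
  rcases eq_or_ne L [] with rfl | hL
  · exact Or.inl rfl
  · refine Or.inr ⟨L.length, fun i => L.get i, List.length_pos_iff.2 hL,
      fun i => hF _ (L.get_mem ..), fun i j hij => List.pairwise_iff_get.1 hp i j hij, hk, ?_⟩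
    ext x
    rw [mem_UL]
    simp only [Finset.mem_biUnion, Finset.mem_univ, true_and]
    constructor
    · rintro ⟨F, hFL, hx⟩
      obtain ⟨i, hi⟩ := List.mem_iff_get.1 hFL
      exact ⟨i, hi ▸ hx⟩
    · rintro ⟨i, hx⟩
      exact ⟨_, L.get_mem .., hx⟩

lemma list_of_S_succ {ξ : Ordinal} {A : Finset ℕ} (h : A ∈ SS.S (ξ + 1)) :
    ∃ L : List (Finset ℕ), (∀ F ∈ L, F.Nonempty ∧ F ∈ SS.S ξ) ∧ L.Pairwise BlockLt ∧
      (∀ m ∈ A, L.length ≤ m) ∧ A = UL L := by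
  rw [SS.succ_def] at h
  rcases h with rfl | ⟨k, Es, hk0, hEs, hlt, hbound, rfl⟩
  · exact ⟨[], by simp, .nil, by simp, rfl⟩
  · refine ⟨List.ofFn Es, ?_, List.pairwise_ofFn.2 fun i j hij => hlt i j hij, ?_, ?_⟩
    · intro F hF
      obtain ⟨i, hi⟩ := (List.mem_ofFn).1 hF
      exact hi ▸ hEs i
    · simpa [List.length_ofFn] using hbound
    · ext x
      rw [mem_UL]
      simp only [Finset.mem_biUnion, Finset.mem_univ, true_and]
      constructor
      · rintro ⟨i, hx⟩
        exact ⟨Es i, (List.mem_ofFn).2 ⟨i, rfl⟩, hx⟩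
      · rintro ⟨F, hFo, hx⟩
        obtain ⟨i, rfl⟩ := (List.mem_ofFn).1 hFo
        exact ⟨i, hx⟩

lemma S_pos : ∀ ξ : Ordinal, ξ < omega1 → ∀ E ∈ SS.S ξ, ∀ m ∈ E, 0 < m := by
  intro ξ
  induction ξ using Ordinal.induction with
  | h ξ ih =>
    intro hξ E hE m hm
    rcases Ordinal.zero_or_succ_or_isSuccLimit ξ with h0 | ⟨η, rfl⟩ | hlim
    · subst h0
      rw [SS.zero_def] at hE
      rcases hE with rfl | ⟨n, hn, rfl⟩
      · simp at hm
      · simp only [Finset.mem_singleton] at hm; omega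
    · rw [← Ordinal.add_one_eq_succ] at hE hξ
      have hηlt : η < η + 1 := by rw [Ordinal.add_one_eq_succ]; exact Order.lt_succ η
      obtain ⟨L, hF, -, -, rfl⟩ := list_of_S_succ hE
      obtain ⟨F, hFL, hmF⟩ := mem_UL.1 hm
      exact ih η hηlt (hηlt.trans hξ) F (hF F hFL).2 m hmF
    · rw [SS.lim_def ξ hξ hlim] at hE
      rcases hE with rfl | ⟨-, n, -, hE⟩
      · simp at hm
      · have h1 : SS.limSeq ξ n + 1 < ξ := by
          rw [Ordinal.add_one_eq_succ]
          exact hlim.succ_lt (SS.limSeq_lt ξ hξ hlim n)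
        exact ih _ h1 (lt_trans h1 hξ) E hE m hm

end Aux13
section Aux13b

variable {SS : SchreierSystem}

lemma lt_add_one_ord (η : Ordinal) : η < η + 1 := by
  rw [Ordinal.add_one_eq_succ]; exact Order.lt_succ η

lemma limSeq_succ_lt {ξ : Ordinal} (hξ : ξ < omega1) (hlim : Order.IsSuccLimit ξ) (n : ℕ) :
    SS.limSeq ξ n + 1 < ξ := by
  rw [Ordinal.add_one_eq_succ]
  exact hlim.succ_lt (SS.limSeq_lt ξ hξ hlim n)

lemma S_singleton : ∀ ξ : Ordinal, ξ < omega1 → ∀ m : ℕ, 0 < m → {m} ∈ SS.S ξ := by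
  intro ξ
  induction ξ using Ordinal.induction with
  | h ξ ih =>
    intro hξ m hm
    rcases Ordinal.zero_or_succ_or_isSuccLimit ξ with h0 | ⟨η, rfl⟩ | hlim
    · subst h0
      rw [SS.zero_def]
      exact Or.inr ⟨m, hm, rfl⟩
    · rw [← Ordinal.add_one_eq_succ] at hξ ⊢
      have hηlt : η < η + 1 := lt_add_one_ord η
      have h1 : UL [({m} : Finset ℕ)] ∈ SS.S (η + 1) := by
        refine S_succ_of_list ?_ (List.pairwise_singleton _ _) ?_
        · intro F hF
          rw [List.mem_singleton] at hF
          subst hF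
          exact ⟨Finset.singleton_nonempty m, ih η hηlt (hηlt.trans hξ) m hm⟩
        · intro x hx
          simp only [UL_cons, UL_nil, Finset.union_empty, Finset.mem_singleton] at hx
          simp only [List.length_singleton]
          omega
      simpa [UL] using h1
    · rw [SS.lim_def ξ hξ hlim]
      refine Or.inr ⟨Finset.singleton_nonempty m, m, ?_, ?_⟩
      · intro x hx; rw [Finset.mem_singleton] at hx; omega
      · exact ih _ (limSeq_succ_lt hξ hlim m) ((limSeq_succ_lt hξ hlim m).trans hξ) m hm

lemma S_hered : ∀ ξ : Ordinal, ξ < omega1 → ∀ E ∈ SS.S ξ, ∀ F ⊆ E, F ∈ SS.S ξ := by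
  intro ξ
  induction ξ using Ordinal.induction with
  | h ξ ih =>
    intro hξ E hE F hFE
    rcases Ordinal.zero_or_succ_or_isSuccLimit ξ with h0 | ⟨η, rfl⟩ | hlim
    · subst h0
      rw [SS.zero_def] at hE ⊢
      rcases hE with rfl | ⟨n, hn, rfl⟩
      · exact Or.inl (Finset.subset_empty.1 hFE)
      · rcases Finset.subset_singleton_iff.1 hFE with rfl | rfl
        · exact Or.inl rfl
        · exact Or.inr ⟨n, hn, rfl⟩
    · rw [← Ordinal.add_one_eq_succ] at hE hξ ⊢
      have hηlt : η < η + 1 := lt_add_one_ord η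
      have ihη := ih η hηlt (hηlt.trans hξ)
      obtain ⟨L, hL, hp, hlen, rfl⟩ := list_of_S_succ hE
      classical
      set L' : List (Finset ℕ) := (L.map (· ∩ F)).filter (fun G => G.Nonempty) with hL'
      have hmemL' : ∀ x, x ∈ UL L' ↔ x ∈ F := by
        intro x
        rw [mem_UL]
        constructor
        · rintro ⟨G, hG, hx⟩
          rw [hL', List.mem_filter] at hG
          obtain ⟨B, hB, rfl⟩ := List.mem_map.1 hG.1
          exact (Finset.mem_inter.1 hx).2
        · intro hx
          obtain ⟨B, hB, hxB⟩ := mem_UL.1 (hFE hx)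
          refine ⟨B ∩ F, ?_, Finset.mem_inter.2 ⟨hxB, hx⟩⟩
          rw [hL', List.mem_filter]
          exact ⟨List.mem_map.2 ⟨B, hB, rfl⟩, by
            simpa using ⟨x, Finset.mem_inter.2 ⟨hxB, hx⟩⟩⟩
      have hULL' : UL L' = F := Finset.ext fun x => hmemL' x
      rw [← hULL']
      refine S_succ_of_list ?_ ?_ ?_
      · intro G hG
        rw [hL', List.mem_filter] at hG
        obtain ⟨B, hB, rfl⟩ := List.mem_map.1 hG.1
        refine ⟨by simpa using hG.2, ihη B (hL B hB).2 _ Finset.inter_subset_left⟩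
      · have h1 : (L.map (· ∩ F)).Pairwise BlockLt := by
          refine List.Pairwise.map _ ?_ hp
          intro A B hAB
          exact blockLt_mono hAB Finset.inter_subset_left Finset.inter_subset_left
        exact h1.sublist (List.filter_sublist)
      · intro m hm
        have h2 : L'.length ≤ L.length := by
          calc L'.length ≤ (L.map (· ∩ F)).length := (List.filter_sublist).length_le
          _ = L.length := List.length_map _
        exact le_trans h2 (hlen m (hFE ((hmemL' m).1 hm)))
    · rw [SS.lim_def ξ hξ hlim] at hE ⊢
      rcases eq_or_ne F ∅ with rfl | hFne
      · exact Or.inl rfl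
      · rcases hE with rfl | ⟨hEne, n, hbd, hE⟩
        · exact absurd (Finset.subset_empty.1 hFE) hFne
        · refine Or.inr ⟨Finset.nonempty_iff_ne_empty.2 hFne, n, fun m hm => hbd m (hFE hm), ?_⟩
          exact ih _ (limSeq_succ_lt hξ hlim n) ((limSeq_succ_lt hξ hlim n).trans hξ) E hE F hFE

lemma S_mono_succ {ξ : Ordinal} (hξ : ξ < omega1) : SS.S ξ ⊆ SS.S (ξ + 1) := by
  intro E hE
  rcases eq_or_ne E ∅ with rfl | hne
  · rw [SS.succ_def]; exact Or.inl rfl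
  · have h1 : UL [E] ∈ SS.S (ξ + 1) := by
      refine S_succ_of_list ?_ (List.pairwise_singleton _ _) ?_
      · intro F hF
        rw [List.mem_singleton] at hF
        subst hF
        exact ⟨Finset.nonempty_iff_ne_empty.2 hne, hE⟩
      · intro m hm
        simp only [UL_cons, UL_nil, Finset.union_empty] at hm
        exact S_pos ξ hξ E hE m hm
    simpa [UL] using h1

lemma S_limSeq_mono {ξ : Ordinal} (hξ : ξ < omega1) (hlim : Order.IsSuccLimit ξ) :
    ∀ {n m : ℕ}, n ≤ m → SS.S (SS.limSeq ξ n + 1) ⊆ SS.S (SS.limSeq ξ m + 1) := by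
  intro n m hnm
  induction m with
  | zero =>
    obtain rfl : n = 0 := Nat.le_zero.1 hnm
    exact subset_rfl
  | succ m ihm =>
    rcases Nat.lt_or_ge n (m + 1) with h | h
    · have h1 := ihm (Nat.lt_succ_iff.1 h)
      have h2 := SS.limSeq_nested ξ hξ hlim m
      have h3 : SS.S (SS.limSeq ξ (m + 1)) ⊆ SS.S (SS.limSeq ξ (m + 1) + 1) :=
        S_mono_succ ((SS.limSeq_lt ξ hξ hlim (m + 1)).trans hξ)
      exact h1.trans (h2.trans h3)
    · obtain rfl : n = m + 1 := le_antisymm hnm h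
      exact subset_rfl

end Aux13b
section Aux13c

variable {SS : SchreierSystem}

lemma head_blockLt {F : Finset ℕ} {L : List (Finset ℕ)} (hp : (F :: L).Pairwise BlockLt) :
    ∀ b ∈ UL L, ∀ a ∈ F, a < b := by
  intro b hb a ha
  obtain ⟨G, hG, hbG⟩ := mem_UL.1 hb
  exact (List.pairwise_cons.1 hp).1 G hG a ha b hbG

lemma residue_peel {ξ : Ordinal} (hered : ∀ E ∈ SS.S ξ, ∀ F ⊆ E, F ∈ SS.S ξ) :
    ∀ L : List (Finset ℕ), (∀ F ∈ L, F.Nonempty ∧ F ∈ SS.S ξ) → L.Pairwise BlockLt →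
    ∀ r : Finset ℕ, r ⊆ UL L → (∀ a ∈ r, ∀ b ∈ UL L, b ≤ a → b ∈ r) →
    ∃ L' : List (Finset ℕ), L'.length ≤ L.length ∧
      (∀ F₀, L.head? = some F₀ → F₀ ⊆ r → L'.length < L.length) ∧
      (∀ F ∈ L', F.Nonempty ∧ F ∈ SS.S ξ) ∧ L'.Pairwise BlockLt ∧ UL L' = UL L \ r := by
  intro L
  induction L with
  | nil =>
    intro _ _ r hr _
    exact ⟨[], le_rfl, by simp, by simp, .nil, by simp⟩
  | cons F L ih =>
    intro hFs hp r hr hinit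
    have hFne : F.Nonempty := (hFs F (by simp)).1
    have hpL : L.Pairwise BlockLt := hp.tail
    have hFlt : ∀ b ∈ UL L, ∀ a ∈ F, a < b := head_blockLt hp
    have hdisj : ∀ x ∈ F, x ∉ UL L := fun x hx hx' => lt_irrefl x (hFlt x hx' x hx)
    by_cases hFr : F ⊆ r
    · have h1 : r \ F ⊆ UL L := by
        intro x hx
        rw [Finset.mem_sdiff] at hx
        have := hr hx.1
        rw [UL_cons, Finset.mem_union] at this
        exact this.resolve_left hx.2
      have h2 : ∀ a ∈ r \ F, ∀ b ∈ UL L, b ≤ a → b ∈ r \ F := by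
        intro a ha b hb hba
        rw [Finset.mem_sdiff] at ha ⊢
        refine ⟨hinit a ha.1 b ?_ hba, fun hbF => hdisj b hbF hb⟩
        rw [UL_cons, Finset.mem_union]; exact Or.inr hb
      obtain ⟨L', hlen, -, hprops, hp', hUL⟩ :=
        ih (fun G hG => hFs G (by simp [hG])) hpL (r \ F) h1 h2
      refine ⟨L', by simpa using Nat.le_succ_of_le hlen,
        fun _ _ _ => by simpa using Nat.lt_succ_of_le hlen, hprops, hp', ?_⟩
      rw [hUL]
      ext x
      simp only [Finset.mem_sdiff, UL_cons, Finset.mem_union]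
      constructor
      · rintro ⟨hx, hx2⟩
        refine ⟨Or.inr hx, fun hxr => hx2 ⟨hxr, fun hxF => hdisj x hxF hx⟩⟩
      · rintro ⟨h, hxr⟩
        rcases h with h | h
        · exact absurd (hFr h) hxr
        · exact ⟨h, fun hcon => hxr hcon.1⟩
    · rcases eq_or_ne r ∅ with rfl | hrne
      · refine ⟨F :: L, le_rfl, ?_, hFs, hp, by simp⟩
        intro F₀ h h2
        rw [List.head?_cons, Option.some.injEq] at h
        subst h
        obtain ⟨c, hc⟩ := hFne
        exact absurd (h2 hc) (by simp)
      · have hrF : r ⊆ F := by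
          intro d hd
          by_contra hdF
          have hdU : d ∈ UL L := by
            have := hr hd
            rw [UL_cons, Finset.mem_union] at this
            exact this.resolve_left hdF
          obtain ⟨c, hcF, hcr⟩ := Finset.not_subset.1 hFr
          refine hcr (hinit d hd c ?_ (le_of_lt (hFlt d hdU c hcF)))
          rw [UL_cons, Finset.mem_union]; exact Or.inl hcF
        obtain ⟨c, hcF, hcr⟩ := Finset.not_subset.1 hFr
        refine ⟨(F \ r) :: L, by simp, ?_, ?_, ?_, ?_⟩
        · intro F₀ h h2
          rw [List.head?_cons, Option.some.injEq] at h
          subst h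
          exact absurd h2 hFr
        · intro G hG
          rcases List.mem_cons.1 hG with rfl | hG'
          · exact ⟨⟨c, Finset.mem_sdiff.2 ⟨hcF, hcr⟩⟩,
              hered F (hFs F (by simp)).2 _ Finset.sdiff_subset⟩
          · exact hFs G (by simp [hG'])
        · refine List.pairwise_cons.2 ⟨?_, hpL⟩
          intro G hG
          exact blockLt_mono ((List.pairwise_cons.1 hp).1 G hG) Finset.sdiff_subset subset_rfl
        · ext x
          simp only [UL_cons, Finset.mem_union, Finset.mem_sdiff]
          constructor
          · rintro (⟨hxF, hxr⟩ | hx)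
            · exact ⟨Or.inl hxF, hxr⟩
            · exact ⟨Or.inr hx, fun hxr => hdisj x (hrF hxr) hx⟩
          · rintro ⟨h | h, hxr⟩
            · exact Or.inl ⟨h, hxr⟩
            · exact Or.inr h

lemma peel_init {ξ : Ordinal} (hered : ∀ E ∈ SS.S ξ, ∀ F ⊆ E, F ∈ SS.S ξ)
    {D : Finset ℕ} (hD : D ∈ MAXf (SS.S ξ)) (hDne : D.Nonempty)
    {L : List (Finset ℕ)} (hFs : ∀ F ∈ L, F.Nonempty ∧ F ∈ SS.S ξ)
    (hp : L.Pairwise BlockLt) (hsub : D ⊆ UL L)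
    (hinit : ∀ a ∈ D, ∀ b ∈ UL L, b ≤ a → b ∈ D) :
    ∃ L' : List (Finset ℕ), L'.length < L.length ∧
      (∀ F ∈ L', F.Nonempty ∧ F ∈ SS.S ξ) ∧ L'.Pairwise BlockLt ∧ UL L' = UL L \ D := by
  cases L with
  | nil => exact absurd (hsub hDne.choose_spec) (by simp)
  | cons F L₀ =>
    have hFne : F.Nonempty := (hFs F (by simp)).1
    have hFlt : ∀ b ∈ UL L₀, ∀ a ∈ F, a < b := head_blockLt hp
    have hFD : F ⊆ D := by
      by_contra hFD
      obtain ⟨c, hcF, hcD⟩ := Finset.not_subset.1 hFD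
      have hDF : D ⊆ F := by
        intro d hd
        have h1 := hsub hd
        rw [UL_cons, Finset.mem_union] at h1
        rcases h1 with h | h
        · exact h
        · exact absurd (hinit d hd c (by rw [UL_cons, Finset.mem_union]; exact Or.inl hcF)
            (le_of_lt (hFlt d h c hcF))) hcD
      have hDeq : D = F := hD.2 F (hFs F (by simp)).2 hDF
      exact hcD (hDeq ▸ hcF)
    obtain ⟨L', hlen, hlt, hprops, hp', hUL⟩ :=
      residue_peel hered (F :: L₀) hFs hp D hsub hinit
    exact ⟨L', hlt F rfl hFD, hprops, hp', hUL⟩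

lemma peel_fin {ξ : Ordinal} (hered : ∀ E ∈ SS.S ξ, ∀ F ⊆ E, F ∈ SS.S ξ) :
    ∀ L : List (Finset ℕ), (∀ F ∈ L, F.Nonempty ∧ F ∈ SS.S ξ) → L.Pairwise BlockLt →
    ∀ D : Finset ℕ, D ∈ MAXf (SS.S ξ) → D.Nonempty → D ⊆ UL L →
    (∀ a ∈ D, ∀ b ∈ UL L, a ≤ b → b ∈ D) →
    ∃ L' : List (Finset ℕ), L'.length < L.length ∧
      (∀ F ∈ L', F.Nonempty ∧ F ∈ SS.S ξ) ∧ L'.Pairwise BlockLt ∧ UL L' = UL L \ D := by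
  intro L
  induction L with
  | nil =>
    intro _ _ D _ hDne hsub _
    exact absurd (hsub hDne.choose_spec) (by simp)
  | cons F L₀ ih =>
    intro hFs hp D hD hDne hsub hfin
    have hFlt : ∀ b ∈ UL L₀, ∀ a ∈ F, a < b := head_blockLt hp
    by_cases hmeet : ∃ x ∈ F, x ∈ D
    · obtain ⟨x, hxF, hxD⟩ := hmeet
      have hL₀D : ∀ b ∈ UL L₀, b ∈ D := fun b hb =>
        hfin x hxD b (by rw [UL_cons, Finset.mem_union]; exact Or.inr hb)
          (le_of_lt (hFlt b hb x hxF))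
      by_cases hFD : F ⊆ D
      · refine ⟨[], by simp, by simp, .nil, ?_⟩
        ext y
        simp only [UL_nil, Finset.notMem_empty, false_iff, UL_cons, Finset.mem_sdiff,
          Finset.mem_union, not_and, not_not]
        rintro (h | h)
        · exact hFD h
        · exact hL₀D y h
      · cases L₀ with
        | nil =>
          have hDF : D ⊆ F := by
            intro d hd
            have := hsub hd
            simpa using this
          have hDeq : D = F := hD.2 F (hFs F (by simp)).2 hDF
          exact absurd (subset_of_eq hDeq.symm) hFD
        | cons G L₁ =>
          obtain ⟨c, hcF, hcD⟩ := Finset.not_subset.1 hFD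
          refine ⟨[F \ D], by simp, ?_, List.pairwise_singleton _ _, ?_⟩
          · intro G' hG'
            rw [List.mem_singleton] at hG'
            subst hG'
            exact ⟨⟨c, Finset.mem_sdiff.2 ⟨hcF, hcD⟩⟩,
              hered F (hFs F (by simp)).2 _ Finset.sdiff_subset⟩
          · ext y
            simp only [UL_cons, UL_nil, Finset.union_empty, Finset.mem_sdiff,
              Finset.mem_union]
            constructor
            · rintro ⟨h, h2⟩
              exact ⟨Or.inl h, h2⟩
            · rintro ⟨h | h, h2⟩
              · exact ⟨h, h2⟩
              · exact absurd (hL₀D y (Finset.mem_union.2 h)) h2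
    · push_neg at hmeet
      have hDL₀ : D ⊆ UL L₀ := by
        intro d hd
        have := hsub hd
        rw [UL_cons, Finset.mem_union] at this
        rcases this with h | h
        · exact absurd hd (hmeet d h)
        · exact h
      have hfin' : ∀ a ∈ D, ∀ b ∈ UL L₀, a ≤ b → b ∈ D := fun a ha b hb hab =>
        hfin a ha b (by rw [UL_cons, Finset.mem_union]; exact Or.inr hb) hab
      obtain ⟨L₁, hlen, hprops, hp₁, hUL⟩ :=
        ih (fun G hG => hFs G (by simp [hG])) hp.tail D hD hDne hDL₀ hfin'
      refine ⟨F :: L₁, by simpa using Nat.succ_lt_succ hlen, ?_, ?_, ?_⟩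
      · intro G hG
        rcases List.mem_cons.1 hG with rfl | hG'
        · exact hFs G (by simp)
        · exact hprops G hG'
      · refine List.pairwise_cons.2 ⟨?_, hp₁⟩
        intro G hG i hi j hj
        have hjU : j ∈ UL L₁ := mem_UL.2 ⟨G, hG, hj⟩
        rw [hUL, Finset.mem_sdiff] at hjU
        exact hFlt j hjU.1 i hi
      · rw [UL_cons, hUL]
        ext y
        simp only [Finset.mem_union, Finset.mem_sdiff, UL_cons]
        constructor
        · rintro (h | ⟨h, h2⟩)
          · exact ⟨Or.inl h, hmeet y h⟩
          · exact ⟨Or.inr h, h2⟩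
        · rintro ⟨h | h, h2⟩
          · exact Or.inl h
          · exact Or.inr ⟨h, h2⟩

end Aux13c
section Aux13d

variable {SS : SchreierSystem}

lemma bottom_iter {ξ : Ordinal} (hered : ∀ E ∈ SS.S ξ, ∀ F ⊆ E, F ∈ SS.S ξ) :
    ∀ Ls : List (Finset ℕ), (∀ F ∈ Ls, F.Nonempty ∧ F ∈ MAXf (SS.S ξ)) →
    Ls.Pairwise BlockLt →
    ∀ Rest : Finset ℕ, (∀ x ∈ UL Ls, ∀ y ∈ Rest, x < y) →
    ∀ M : List (Finset ℕ), (∀ F ∈ M, F.Nonempty ∧ F ∈ SS.S ξ) → M.Pairwise BlockLt →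
    UL M = UL Ls ∪ Rest →
    ∃ M' : List (Finset ℕ), M'.length + Ls.length ≤ M.length ∧
      (∀ F ∈ M', F.Nonempty ∧ F ∈ SS.S ξ) ∧ M'.Pairwise BlockLt ∧ UL M' = Rest := by
  intro Ls
  induction Ls with
  | nil =>
    intro _ _ Rest _ M hM hpM hUM
    exact ⟨M, by simp, hM, hpM, by simpa using hUM⟩
  | cons D Ls₀ ih =>
    intro hLs hpLs Rest hlt M hM hpM hUM
    have hDmax := (hLs D (by simp)).2
    have hDne := (hLs D (by simp)).1
    have hDlt : ∀ b ∈ UL Ls₀, ∀ a ∈ D, a < b := head_blockLt hpLs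
    have haD : ∀ a ∈ D, a ∈ UL (D :: Ls₀) := fun a ha => by
      rw [UL_cons, Finset.mem_union]; exact Or.inl ha
    have hDsub : D ⊆ UL M := by
      intro d hd
      rw [hUM, Finset.mem_union]
      exact Or.inl (haD d hd)
    have hinit : ∀ a ∈ D, ∀ b ∈ UL M, b ≤ a → b ∈ D := by
      intro a ha b hb hba
      rw [hUM, Finset.mem_union] at hb
      rcases hb with hb | hb
      · rw [UL_cons, Finset.mem_union] at hb
        rcases hb with hb | hb
        · exact hb
        · exact absurd hba (not_le.2 (hDlt b hb a ha))
      · exact absurd hba (not_le.2 (hlt a (haD a ha) b hb))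
    obtain ⟨M₁, hlen₁, hM₁, hp₁, hU₁⟩ :=
      peel_init hered hDmax hDne hM hpM hDsub hinit
    have hU₁' : UL M₁ = UL Ls₀ ∪ Rest := by
      rw [hU₁, hUM]
      ext x
      simp only [Finset.mem_sdiff, Finset.mem_union, UL_cons]
      constructor
      · rintro ⟨(h | h) | h, h2⟩
        · exact absurd h h2
        · exact Or.inl h
        · exact Or.inr h
      · rintro (h | h)
        · exact ⟨Or.inl (Or.inr h), fun hD => lt_irrefl x (hDlt x h x hD)⟩
        · exact ⟨Or.inr h, fun hD => lt_irrefl x (hlt x (haD x hD) x h)⟩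
    obtain ⟨M', hlen', hM', hp', hU'⟩ :=
      ih (fun G hG => hLs G (by simp [hG])) hpLs.tail Rest
        (fun x hx y hy => hlt x (by rw [UL_cons, Finset.mem_union]; exact Or.inr hx) y hy)
        M₁ hM₁ hp₁ hU₁'
    refine ⟨M', ?_, hM', hp', hU'⟩
    simp only [List.length_cons]
    omega

lemma top_iter {ξ : Ordinal} (hered : ∀ E ∈ SS.S ξ, ∀ F ⊆ E, F ∈ SS.S ξ) :
    ∀ Ls : List (Finset ℕ), (∀ F ∈ Ls, F.Nonempty ∧ F ∈ MAXf (SS.S ξ)) →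
    Ls.Pairwise BlockLt →
    ∀ Rest : Finset ℕ, (∀ x ∈ UL Ls, ∀ y ∈ Rest, y < x) →
    ∀ M : List (Finset ℕ), (∀ F ∈ M, F.Nonempty ∧ F ∈ SS.S ξ) → M.Pairwise BlockLt →
    UL M = Rest ∪ UL Ls →
    ∃ M' : List (Finset ℕ), M'.length + Ls.length ≤ M.length ∧
      (∀ F ∈ M', F.Nonempty ∧ F ∈ SS.S ξ) ∧ M'.Pairwise BlockLt ∧ UL M' = Rest := by
  intro Ls
  induction Ls using List.reverseRecOn with
  | nil =>
    intro _ _ Rest _ M hM hpM hUM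
    exact ⟨M, by simp, hM, hpM, by simpa using hUM⟩
  | append_singleton Ls₀ D ih =>
    intro hLs hpLs Rest hlt M hM hpM hUM
    have hDmem : D ∈ Ls₀ ++ [D] := by simp
    have hDmax := (hLs D hDmem).2
    have hDne := (hLs D hDmem).1
    have hpLs₀ : Ls₀.Pairwise BlockLt := hpLs.sublist (List.sublist_append_left Ls₀ [D])
    have hDhigh : ∀ a ∈ UL Ls₀, ∀ b ∈ D, a < b := by
      intro a ha b hb
      obtain ⟨G, hG, haG⟩ := mem_UL.1 ha
      exact ((List.pairwise_append.1 hpLs).2.2 G hG D (by simp)) a haG b hb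
    have hULapp : UL (Ls₀ ++ [D]) = UL Ls₀ ∪ D := by
      rw [UL_append]
      simp
    have hDin : ∀ b ∈ D, b ∈ UL (Ls₀ ++ [D]) := by
      intro b hb
      rw [hULapp, Finset.mem_union]; exact Or.inr hb
    have hsub : D ⊆ UL M := by
      intro d hd
      rw [hUM, Finset.mem_union]
      exact Or.inr (hDin d hd)
    have hfin : ∀ a ∈ D, ∀ b ∈ UL M, a ≤ b → b ∈ D := by
      intro a ha b hb hab
      rw [hUM, Finset.mem_union] at hb
      rcases hb with hb | hb
      · exact absurd hab (not_le.2 (hlt a (hDin a ha) b hb))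
      · rw [hULapp, Finset.mem_union] at hb
        rcases hb with hb | hb
        · exact absurd hab (not_le.2 (hDhigh b hb a ha))
        · exact hb
    obtain ⟨M₁, hlen₁, hM₁, hp₁, hU₁⟩ := peel_fin hered M hM hpM D hDmax hDne hsub hfin
    have hU₁' : UL M₁ = Rest ∪ UL Ls₀ := by
      rw [hU₁, hUM, hULapp]
      ext x
      simp only [Finset.mem_sdiff, Finset.mem_union]
      constructor
      · rintro ⟨h | (h | h), h2⟩
        · exact Or.inl h
        · exact Or.inr h
        · exact absurd h h2
      · rintro (h | h)
        · exact ⟨Or.inl h, fun hD => lt_irrefl x (hlt x (hDin x hD) x h)⟩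
        · exact ⟨Or.inr (Or.inl h), fun hD => lt_irrefl x (hDhigh x h x hD)⟩
    obtain ⟨M', hlen', hM', hp', hU'⟩ :=
      ih (fun G hG => hLs G (by simp [hG])) hpLs₀ Rest
        (fun x hx y hy => hlt x (by rw [hULapp, Finset.mem_union]; exact Or.inl hx) y hy)
        M₁ hM₁ hp₁ hU₁'
    refine ⟨M', ?_, hM', hp', hU'⟩
    simp only [List.length_append, List.length_cons, List.length_nil] at *
    omega

lemma exists_split {α : Type*} (p : α → Prop) [DecidablePred p] :
    ∀ L : List α, (∃ B ∈ L, ¬ p B) →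
      ∃ L₁ F L₂, L = L₁ ++ F :: L₂ ∧ (∀ B ∈ L₁, p B) ∧ ¬ p F := by
  intro L
  induction L with
  | nil => rintro ⟨B, hB, -⟩; simp at hB
  | cons F L ih =>
    intro h
    by_cases hF : p F
    · have h' : ∃ B ∈ L, ¬ p B := by
        obtain ⟨B, hB, hpB⟩ := h
        rcases List.mem_cons.1 hB with rfl | hB'
        · exact absurd hF hpB
        · exact ⟨B, hB', hpB⟩
      obtain ⟨L₁, G, L₂, rfl, h1, h2⟩ := ih h'
      refine ⟨F :: L₁, G, L₂, rfl, ?_, h2⟩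
      intro B hB
      rcases List.mem_cons.1 hB with rfl | hB'
      · exact hF
      · exact h1 B hB'
    · exact ⟨[], F, L, rfl, by simp, hF⟩

lemma max_union {ξ : Ordinal} (hξ : ξ < omega1)
    {L : List (Finset ℕ)} (hL : ∀ F ∈ L, F.Nonempty ∧ F ∈ MAXf (SS.S ξ))
    (hp : L.Pairwise BlockLt) (hlen : ∀ m ∈ UL L, L.length ≤ m)
    (hmin : L.length ∈ UL L) : UL L ∈ MAXf (SS.S (ξ + 1)) := by
  classical
  have hered : ∀ E ∈ SS.S ξ, ∀ F ⊆ E, F ∈ SS.S ξ := S_hered ξ hξ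
  have heredS : ∀ E ∈ SS.S (ξ + 1), ∀ F ⊆ E, F ∈ SS.S (ξ + 1) := S_hered (ξ + 1) (succ_lt_omega1 hξ)
  have hmem : UL L ∈ SS.S (ξ + 1) :=
    S_succ_of_list (fun F hF => ⟨(hL F hF).1, (hL F hF).2.1⟩) hp hlen
  refine ⟨hmem, ?_⟩
  intro G hG hsub
  by_contra hne
  obtain ⟨a, haG, haE⟩ := Finset.exists_of_ssubset (lt_of_le_of_ne hsub hne)
  have hA : insert a (UL L) ∈ SS.S (ξ + 1) :=
    heredS G hG _ (Finset.insert_subset haG hsub)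
  obtain ⟨M, hM, hpM, hkM, hUM⟩ := list_of_S_succ hA
  have hk'k : M.length ≤ L.length := hkM _ (Finset.mem_insert_of_mem hmin)
  by_cases hall : ∀ B ∈ L, ∀ x ∈ B, x < a
  · have h1 : UL M = UL L ∪ {a} := by
      rw [← hUM]
      ext x
      simp only [Finset.mem_insert, Finset.mem_union, Finset.mem_singleton]
      tauto
    obtain ⟨M', hlen', hM', hp', hU'⟩ := bottom_iter hered L hL hp {a}
      (fun x hx y hy => by
        rw [Finset.mem_singleton] at hy
        subst hy
        obtain ⟨B, hB, hxB⟩ := mem_UL.1 hx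
        exact hall B hB x hxB)
      M hM hpM h1
    have hM'0 : M'.length = 0 := by omega
    have hM'nil : M' = [] := List.length_eq_zero_iff.1 hM'0
    subst hM'nil
    simp only [UL_nil] at hU'
    exact absurd (hU' ▸ Finset.mem_singleton_self a) (Finset.notMem_empty a)
  · push_neg at hall
    obtain ⟨L₁, F, L₂, rfl, hL₁, hF⟩ :=
      exists_split (fun B => ∀ x ∈ B, x < a) L (by
        obtain ⟨B, hB, x, hx, hxa⟩ := hall
        exact ⟨B, hB, fun h => absurd (h x hx) (not_lt.2 hxa)⟩)
    push_neg at hF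
    obtain ⟨y, hyF, hay'⟩ := hF
    have hpL₁ : L₁.Pairwise BlockLt := hp.sublist (List.sublist_append_left L₁ (F :: L₂))
    have hpFL₂ : (F :: L₂).Pairwise BlockLt := hp.sublist (List.sublist_append_right L₁ (F :: L₂))
    have hcross : ∀ B ∈ L₁, ∀ C ∈ F :: L₂, BlockLt B C :=
      fun B hB C hC => (List.pairwise_append.1 hp).2.2 B hB C hC
    have hL₂a : ∀ B ∈ L₂, ∀ x ∈ B, a < x := by
      intro B hB x hx
      exact lt_of_le_of_lt hay' ((List.pairwise_cons.1 hpFL₂).1 B hB y hyF x hx)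
    have haUL : a ∉ UL (L₁ ++ F :: L₂) := haE
    -- first peel the low blocks L₁
    have hULsplit : UL (L₁ ++ F :: L₂) = UL L₁ ∪ (F ∪ UL L₂) := by
      rw [UL_append, UL_cons]
    have hUM1 : UL M = UL L₁ ∪ insert a (F ∪ UL L₂) := by
      rw [← hUM, hULsplit]
      ext x
      simp only [Finset.mem_insert, Finset.mem_union]
      tauto
    obtain ⟨M₁, hlen₁, hM₁, hp₁, hU₁⟩ := bottom_iter hered L₁
      (fun B hB => hL B (by simp [hB])) hpL₁ (insert a (F ∪ UL L₂))
      (by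
        intro x hx y hy
        obtain ⟨B, hB, hxB⟩ := mem_UL.1 hx
        rcases Finset.mem_insert.1 hy with rfl | hy'
        · exact hL₁ B hB x hxB
        · rcases Finset.mem_union.1 hy' with h | h
          · exact hcross B hB F (by simp) x hxB y h
          · obtain ⟨C, hC, hyC⟩ := mem_UL.1 h
            exact hcross B hB C (by simp [hC]) x hxB y hyC)
      M hM hpM hUM1
    -- then peel the high blocks L₂
    have hU₁' : UL M₁ = insert a F ∪ UL L₂ := by
      rw [hU₁]
      ext x
      simp only [Finset.mem_insert, Finset.mem_union]
      tauto
    have hpL₂ : L₂.Pairwise BlockLt := hpFL₂.tail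
    obtain ⟨M₂, hlen₂, hM₂, hp₂, hU₂⟩ := top_iter hered L₂
      (fun B hB => hL B (by simp [hB])) hpL₂ (insert a F)
      (by
        intro x hx y hy
        obtain ⟨B, hB, hxB⟩ := mem_UL.1 hx
        rcases Finset.mem_insert.1 hy with rfl | hy'
        · exact hL₂a B hB x hxB
        · exact (List.pairwise_cons.1 hpFL₂).1 B hB y hy' x hxB)
      M₁ hM₁ hp₁ hU₁'
    have hlenL : (L₁ ++ F :: L₂).length = L₁.length + L₂.length + 1 := by
      simp [List.length_append]
      omega
    have hM₂len : M₂.length ≤ 1 := by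
      rw [hlenL] at hk'k
      omega
    match M₂, hM₂len with
    | [], _ =>
      simp only [UL_nil] at hU₂
      exact absurd (hU₂ ▸ Finset.mem_insert_self a F) (Finset.notMem_empty a)
    | [F'], _ =>
      have hF'm : F' ∈ SS.S ξ := (hM₂ F' (by simp)).2
      have hU : F' = insert a F := by simpa using hU₂
      have hFmax := (hL F (by simp)).2
      have hFF' : F ⊆ F' := by rw [hU]; exact Finset.subset_insert a F
      have hFeq : F = F' := hFmax.2 F' hF'm hFF'
      have haF : a ∈ F := by
        rw [hFeq, hU]
        exact Finset.mem_insert_self a F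
      exact haUL (mem_UL.2 ⟨F, by simp, haF⟩)

end Aux13d
section Aux13e

variable {SS : SchreierSystem}

lemma iterAvg_eq (G : Set ℕ → (ℕ →₀ ℝ)) (M : Set ℕ) (n : ℕ) :
    iterAvg G M n = G (M \ ⋃ (i : ℕ) (_ : i < n), ((iterAvg G M i).support : Set ℕ)) := by
  have h : iterAvg G M n = Nat.strongRec
      (fun n prev => G (M \ ⋃ (i : ℕ) (h : i < n), ((prev i h).support : Set ℕ))) n := rfl
  rw [h, Nat.strongRec_eq]
  rfl

lemma RA_zero_eq (M : Set ℕ) (n : ℕ) :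
    RA SS 0 M n = Finsupp.single (Nat.nth (· ∈ M) n) (1 : ℝ) := by
  show Ordinal.limitRecOn (motive := fun _ => Set ℕ → ℕ → (ℕ →₀ ℝ)) 0 _ _ _ M n = _
  rw [Ordinal.limitRecOn_zero]

lemma RA_succ_eq (ξ : Ordinal) (M : Set ℕ) :
    RA SS (ξ + 1) M = iterAvg
      (fun N => (((sInf N : ℕ) : ℝ))⁻¹ • ∑ j ∈ Finset.range (sInf N), RA SS ξ N j) M := by
  show Ordinal.limitRecOn (motive := fun _ => Set ℕ → ℕ → (ℕ →₀ ℝ)) (ξ + 1) _ _ _ M = _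
  rw [Ordinal.add_one_eq_succ, Ordinal.limitRecOn_succ]
  rfl

lemma RA_lim_eq (ξ : Ordinal) (hlim : Order.IsSuccLimit ξ) (M : Set ℕ) :
    RA SS ξ M = iterAvg
      (fun N => if h : SS.limSeq ξ (sInf N) + 1 < ξ then
        RA SS (SS.limSeq ξ (sInf N) + 1) N 0 else 0) M := by
  show Ordinal.limitRecOn (motive := fun _ => Set ℕ → ℕ → (ℕ →₀ ℝ)) ξ _ _ _ M = _
  rw [Ordinal.limitRecOn_limit _ _ _ _ hlim]
  rfl

/-- The set `N` with the supports of the first `n` repeated averages removed. -/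
def Nrem (SS : SchreierSystem) (ξ : Ordinal) (N : Set ℕ) (n : ℕ) : Set ℕ :=
  N \ ⋃ (i : ℕ) (_ : i < n), ((RA SS ξ N i).support : Set ℕ)

lemma Nrem_infinite {ξ : Ordinal} {N : Set ℕ} (h : N.Infinite) (n : ℕ) :
    (Nrem SS ξ N n).Infinite := by
  refine h.diff ?_
  exact Set.Finite.biUnion (Set.finite_Iio n) (fun i _ => (RA SS ξ N i).support.finite_toSet)

lemma Nrem_zero (ξ : Ordinal) (N : Set ℕ) : Nrem SS ξ N 0 = N := by
  ext x
  simp [Nrem]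

lemma Nrem_anti {ξ : Ordinal} {N : Set ℕ} {m n : ℕ} (h : m ≤ n) :
    Nrem SS ξ N n ⊆ Nrem SS ξ N m := by
  intro x hx
  refine ⟨hx.1, fun hcon => hx.2 ?_⟩
  obtain ⟨i, hi⟩ := Set.mem_iUnion.1 hcon
  obtain ⟨him, hxi⟩ := Set.mem_iUnion.1 hi
  exact Set.mem_iUnion.2 ⟨i, Set.mem_iUnion.2 ⟨lt_of_lt_of_le him h, hxi⟩⟩

/-- The inductive property of the repeated-averages hierarchy. -/
def GoodAt (SS : SchreierSystem) (ξ : Ordinal) : Prop :=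
  ∀ N : Set ℕ, N.Infinite → (∀ m ∈ N, 0 < m) → ∀ n : ℕ,
    (RA SS ξ N n).support.Nonempty ∧ ↑(RA SS ξ N n).support ⊆ Nrem SS ξ N n ∧
    (∀ a ∈ (RA SS ξ N n).support, ∀ b ∈ Nrem SS ξ N n, b ≤ a → b ∈ (RA SS ξ N n).support) ∧
    (RA SS ξ N n).support ∈ MAXf (SS.S ξ)

lemma good_of_iterAvg {ξ : Ordinal} {G : Set ℕ → (ℕ →₀ ℝ)}
    (hRA : ∀ N : Set ℕ, RA SS ξ N = iterAvg G N)
    (hG : ∀ N : Set ℕ, N.Infinite → (∀ m ∈ N, 0 < m) →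
      (G N).support.Nonempty ∧ ↑(G N).support ⊆ N ∧
      (∀ a ∈ (G N).support, ∀ b ∈ N, b ≤ a → b ∈ (G N).support) ∧
      (G N).support ∈ MAXf (SS.S ξ)) : GoodAt SS ξ := by
  intro N hN hpos n
  have hrem : Nrem SS ξ N n = N \ ⋃ (i : ℕ) (_ : i < n), ((iterAvg G N i).support : Set ℕ) := by
    unfold Nrem
    rw [hRA]
  have heq : RA SS ξ N n = G (Nrem SS ξ N n) := by
    rw [hRA, iterAvg_eq, ← hrem]
  have hinf : (Nrem SS ξ N n).Infinite := Nrem_infinite hN n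
  have hpos' : ∀ m ∈ Nrem SS ξ N n, 0 < m := fun m hm => hpos m hm.1
  obtain ⟨h1, h2, h3, h4⟩ := hG _ hinf hpos'
  rw [heq]
  exact ⟨h1, h2, h3, h4⟩

lemma goodAt_zero : GoodAt SS 0 := by
  classical
  intro N hN hpos n
  have hsupp : ∀ i, (RA SS 0 N i).support = {Nat.nth (· ∈ N) i} := by
    intro i
    rw [RA_zero_eq]
    exact Finsupp.support_single_ne_zero _ one_ne_zero
  have hInf : {x | x ∈ N}.Infinite := hN
  have hmono := Nat.nth_strictMono (p := (· ∈ N)) hInf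
  have hmem : ∀ i, Nat.nth (· ∈ N) i ∈ N := fun i => Nat.nth_mem_of_infinite hInf i
  have hNremMem : ∀ b, b ∈ Nrem SS 0 N n ↔ b ∈ N ∧ ∀ i < n, b ≠ Nat.nth (· ∈ N) i := by
    intro b
    unfold Nrem
    simp only [Set.mem_diff, Set.mem_iUnion, Finset.mem_coe, hsupp, Finset.mem_singleton]
    constructor
    · rintro ⟨hb, hb2⟩
      exact ⟨hb, fun i hi hbe => hb2 ⟨i, hi, hbe⟩⟩
    · rintro ⟨hb, hb2⟩
      exact ⟨hb, fun ⟨i, hi, hbe⟩ => hb2 i hi hbe⟩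
  refine ⟨?_, ?_, ?_, ?_⟩
  · rw [hsupp]
    exact Finset.singleton_nonempty _
  · intro x hx
    rw [hsupp, Finset.coe_singleton, Set.mem_singleton_iff] at hx
    subst hx
    rw [hNremMem]
    exact ⟨hmem n, fun i hi hbe => (Nat.lt_irrefl i (by
      have := hmono.injective hbe.symm
      omega))⟩
  · intro a ha b hb hba
    rw [hsupp, Finset.mem_singleton] at ha ⊢
    subst ha
    rw [hNremMem] at hb
    letI := Classical.decPred (· ∈ N)
    have hcount : Nat.nth (· ∈ N) (Nat.count (· ∈ N) b) = b := Nat.nth_count hb.1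
    have hge : n ≤ Nat.count (· ∈ N) b := by
      by_contra hcon
      exact hb.2 _ (not_le.1 hcon) hcount.symm
    have := hmono.monotone hge
    rw [hcount] at this
    omega
  · constructor
    · rw [SS.zero_def, hsupp]
      exact Or.inr ⟨_, hpos _ (hmem n), rfl⟩
    · intro G hG hsub
      rw [SS.zero_def] at hG
      rw [hsupp] at hsub ⊢
      rcases hG with rfl | ⟨m, hm, rfl⟩
      · exact absurd (hsub (Finset.mem_singleton_self _)) (Finset.notMem_empty _)
      · rw [Finset.singleton_subset_iff, Finset.mem_singleton] at hsub
        rw [hsub]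

lemma goodAt_succ {ξ : Ordinal} (hξ : ξ < omega1) (ihG : GoodAt SS ξ) :
    GoodAt SS (ξ + 1) := by
  classical
  refine good_of_iterAvg (fun N => RA_succ_eq ξ N) ?_
  intro N hN hpos
  set G : ℕ →₀ ℝ :=
    (((sInf N : ℕ) : ℝ))⁻¹ • ∑ j ∈ Finset.range (sInf N), RA SS ξ N j with hGdef
  show G.support.Nonempty ∧ ↑G.support ⊆ N ∧
    (∀ a ∈ G.support, ∀ b ∈ N, b ≤ a → b ∈ G.support) ∧ G.support ∈ MAXf (SS.S (ξ + 1))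
  have hNne : N.Nonempty := hN.nonempty
  have hk0 : 0 < sInf N := hpos _ (Nat.sInf_mem hNne)
  have hfacts := fun j => ihG N hN hpos j
  have hsubN : ∀ j, ∀ x ∈ (RA SS ξ N j).support, x ∈ N := fun j x hx =>
    ((hfacts j).2.1 hx).1
  have key : ∀ i j, i < j → ∀ x ∈ (RA SS ξ N j).support, x ∉ (RA SS ξ N i).support := by
    intro i j hij x hx hxi
    have hxN := (hfacts j).2.1 hx
    exact hxN.2 (Set.mem_iUnion.2 ⟨i, Set.mem_iUnion.2 ⟨hij, hxi⟩⟩)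
  have hdisj : ∀ i j, i ≠ j → Disjoint (RA SS ξ N i).support (RA SS ξ N j).support := by
    intro i j hij
    rcases lt_or_gt_of_ne hij with h | h
    · exact Finset.disjoint_left.2 fun {x} hx hx2 => key i j h x hx2 hx
    · exact Finset.disjoint_left.2 fun {x} hx hx2 => key j i h x hx hx2
  have hsupG : G.support = (Finset.range (sInf N)).biUnion (fun j => (RA SS ξ N j).support) := by
    rw [hGdef, Finsupp.support_smul_eq (inv_ne_zero (by exact_mod_cast hk0.ne'))]
    exact Finsupp.support_sum_eq_biUnion _ (fun i j hij => hdisj i j hij)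
  have hsub : ∀ x ∈ G.support, x ∈ N := by
    intro x hx
    rw [hsupG] at hx
    obtain ⟨j, hj, hxj⟩ := Finset.mem_biUnion.1 hx
    exact hsubN j x hxj
  have hinit : ∀ a ∈ G.support, ∀ b ∈ N, b ≤ a → b ∈ G.support := by
    intro a ha b hbN hba
    rw [hsupG] at ha ⊢
    obtain ⟨j, hj, haj⟩ := Finset.mem_biUnion.1 ha
    by_cases hb : ∀ i, i < j → b ∉ (RA SS ξ N i).support
    · have hbrem : b ∈ Nrem SS ξ N j := ⟨hbN, by
        intro hcon
        obtain ⟨i, hi⟩ := Set.mem_iUnion.1 hcon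
        obtain ⟨hij, hbi⟩ := Set.mem_iUnion.1 hi
        exact hb i hij hbi⟩
      exact Finset.mem_biUnion.2 ⟨j, hj, (hfacts j).2.2.1 a haj b hbrem hba⟩
    · push_neg at hb
      obtain ⟨i, hij, hbi⟩ := hb
      exact Finset.mem_biUnion.2 ⟨i, Finset.mem_range.2 (lt_trans hij (Finset.mem_range.1 hj)), hbi⟩
  have hne : G.support.Nonempty := by
    obtain ⟨a, ha⟩ := (hfacts 0).1
    refine ⟨a, ?_⟩
    rw [hsupG]
    exact Finset.mem_biUnion.2 ⟨0, Finset.mem_range.2 hk0, ha⟩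
  have hblockLt : ∀ i j, i < j → BlockLt (RA SS ξ N i).support (RA SS ξ N j).support := by
    intro i j hij x hx y hy
    have hyrem : y ∈ Nrem SS ξ N j := (hfacts j).2.1 hy
    have hyremi : y ∈ Nrem SS ξ N i := Nrem_anti (le_of_lt hij) hyrem
    by_contra hxy
    push_neg at hxy
    have hmem : y ∈ (RA SS ξ N i).support := (hfacts i).2.2.1 x hx y hyremi hxy
    exact hyrem.2 (Set.mem_iUnion.2 ⟨i, Set.mem_iUnion.2 ⟨hij, hmem⟩⟩)
  set L : List (Finset ℕ) := (List.range (sInf N)).map (fun j => (RA SS ξ N j).support)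
    with hLdef
  have hUL : UL L = G.support := by
    rw [hsupG]
    ext x
    rw [mem_UL]
    simp only [hLdef, List.mem_map, List.mem_range, Finset.mem_biUnion, Finset.mem_range]
    constructor
    · rintro ⟨F, ⟨j, hj, rfl⟩, hx⟩
      exact ⟨j, hj, hx⟩
    · rintro ⟨j, hj, hx⟩
      exact ⟨_, ⟨j, hj, rfl⟩, hx⟩
  have hLlen : L.length = sInf N := by simp [hLdef]
  have hLp : L.Pairwise BlockLt :=
    List.Pairwise.map _ (fun a b hab => hblockLt a b hab) List.pairwise_lt_range
  have hmin : sInf N ∈ G.support := by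
    obtain ⟨a, ha0⟩ := (hfacts 0).1
    have haG : a ∈ G.support := by
      rw [hsupG]
      exact Finset.mem_biUnion.2 ⟨0, Finset.mem_range.2 hk0, ha0⟩
    exact hinit a haG (sInf N) (Nat.sInf_mem hNne) (Nat.sInf_le (hsub a haG))
  have hmax : UL L ∈ MAXf (SS.S (ξ + 1)) := by
    refine max_union hξ ?_ hLp ?_ ?_
    · intro F hF
      rw [hLdef] at hF
      obtain ⟨j, hj, rfl⟩ := List.mem_map.1 hF
      exact ⟨(hfacts j).1, (hfacts j).2.2.2⟩
    · intro m hm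
      rw [hUL] at hm
      rw [hLlen]
      exact Nat.sInf_le (hsub m hm)
    · rw [hUL, hLlen]
      exact hmin
  exact ⟨hne, hsub, hinit, hUL ▸ hmax⟩

lemma goodAt_limit {ξ : Ordinal} (hξ : ξ < omega1) (hlim : Order.IsSuccLimit ξ)
    (ih : ∀ η < ξ, GoodAt SS η) : GoodAt SS ξ := by
  refine good_of_iterAvg (fun N => RA_lim_eq ξ hlim N) ?_
  intro N hN hpos
  have hNne : N.Nonempty := hN.nonempty
  have hγlt : SS.limSeq ξ (sInf N) + 1 < ξ := limSeq_succ_lt hξ hlim _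
  rw [dif_pos hγlt]
  obtain ⟨h1, h2, h3, h4⟩ := ih _ hγlt N hN hpos 0
  rw [Nrem_zero] at h2 h3
  set E := (RA SS (SS.limSeq ξ (sInf N) + 1) N 0).support with hE
  have hminE : sInf N ∈ E := by
    obtain ⟨a, ha⟩ := h1
    exact h3 a ha (sInf N) (Nat.sInf_mem hNne) (Nat.sInf_le (h2 ha))
  refine ⟨h1, h2, h3, ?_, ?_⟩
  · rw [SS.lim_def ξ hξ hlim]
    exact Or.inr ⟨h1, sInf N, fun m hm => Nat.sInf_le (h2 hm), h4.1⟩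
  · intro G' hG' hEG'
    rw [SS.lim_def ξ hξ hlim] at hG'
    rcases hG' with rfl | ⟨hG'ne, n', hbd, hG'mem⟩
    · exact Finset.subset_empty.1 hEG'
    · have hn' : n' ≤ sInf N := hbd _ (hEG' hminE)
      exact h4.2 G' (S_limSeq_mono hξ hlim hn' hG'mem) hEG'

lemma good_all : ∀ ξ : Ordinal, ξ < omega1 → GoodAt SS ξ := by
  intro ξ
  induction ξ using Ordinal.induction with
  | h ξ ih =>
    intro hξ
    rcases Ordinal.zero_or_succ_or_isSuccLimit ξ with rfl | ⟨η, rfl⟩ | hlim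
    · exact goodAt_zero
    · rw [← Ordinal.add_one_eq_succ] at hξ ⊢
      have hηlt : η < η + 1 := lt_add_one_ord η
      exact goodAt_succ (hηlt.trans hξ) (ih η hηlt (hηlt.trans hξ))
    · exact goodAt_limit hξ hlim (fun η hη => ih η hη (hη.trans hξ))

end Aux13e
/-- Lemma `repeatedaveragesfacts` (ii) of the paper. Every infinite
`M` has a unique partition `M = ⋃_n E_n` into successive maximal members of `S_ξ`, and
`supp 𝕊^ξ_{M,n} = E_n` for all `n` (both sequences being indexed from `0` here). -/
theorem statement13 (SS : SchreierSystem) (ξ : Ordinal) (hξ : ξ < omega1)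
    (M : Set ℕ) (hM : M.Infinite) (hMpos : ∀ m ∈ M, 0 < m) :
    ∃ E : ℕ → Finset ℕ,
      ((∀ n, E n ∈ MAXf (SS.S ξ)) ∧ (∀ n, BlockLt (E n) (E (n + 1))) ∧
        M = ⋃ n, (E n : Set ℕ)) ∧
      (∀ E' : ℕ → Finset ℕ,
        ((∀ n, E' n ∈ MAXf (SS.S ξ)) ∧ (∀ n, BlockLt (E' n) (E' (n + 1))) ∧
          M = ⋃ n, (E' n : Set ℕ)) → E' = E) ∧
      (∀ n, (RA SS ξ M n).support = E n)    := by
  classical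
  have hg := good_all (SS := SS) ξ hξ M hM hMpos
  set E : ℕ → Finset ℕ := fun n => (RA SS ξ M n).support with hEdef
  have hne : ∀ n, (E n).Nonempty := fun n => (hg n).1
  have hsub : ∀ n, ↑(E n) ⊆ Nrem SS ξ M n := fun n => (hg n).2.1
  have hinit : ∀ n, ∀ a ∈ E n, ∀ b ∈ Nrem SS ξ M n, b ≤ a → b ∈ E n := fun n => (hg n).2.2.1
  have hmax : ∀ n, E n ∈ MAXf (SS.S ξ) := fun n => (hg n).2.2.2
  have hEnotin : ∀ i n, i < n → ∀ x ∈ E i, x ∉ Nrem SS ξ M n := by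
    intro i n hin x hx hxr
    exact hxr.2 (Set.mem_iUnion.2 ⟨i, Set.mem_iUnion.2 ⟨hin, hx⟩⟩)
  have hblock : ∀ i j, i < j → BlockLt (E i) (E j) := by
    intro i j hij x hx y hy
    have hyr : y ∈ Nrem SS ξ M j := hsub j hy
    have hyri : y ∈ Nrem SS ξ M i := Nrem_anti (le_of_lt hij) hyr
    by_contra hxy
    push_neg at hxy
    exact hEnotin i j hij y (hinit i x hx y hyri hxy) hyr
  have hEsubM : ∀ n, ∀ x ∈ E n, x ∈ M := fun n x hx => (hsub n hx).1
  have hcov : ∀ m ∈ M, ∃ n, m ∈ E n := by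
    intro m hm
    by_contra hcon
    push_neg at hcon
    have hrem : ∀ n, m ∈ Nrem SS ξ M n := by
      intro n
      refine ⟨hm, fun hx => ?_⟩
      obtain ⟨i, hi⟩ := Set.mem_iUnion.1 hx
      obtain ⟨hin, hxi⟩ := Set.mem_iUnion.1 hi
      exact hcon i hxi
    set c : ℕ → ℕ := fun n => sInf (Nrem SS ξ M n) with hc
    have hcmem : ∀ n, c n ∈ Nrem SS ξ M n := fun n =>
      Nat.sInf_mem (Nrem_infinite hM n).nonempty
    have hcE : ∀ n, c n ∈ E n := by
      intro n
      obtain ⟨a, ha⟩ := hne n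
      exact hinit n a ha (c n) (hcmem n) (Nat.sInf_le (hsub n ha))
    have hcmono : StrictMono c := by
      refine strictMono_nat_of_lt_succ ?_
      intro n
      have h1 : c (n + 1) ∈ Nrem SS ξ M n := Nrem_anti (Nat.le_succ n) (hcmem (n + 1))
      have hle : c n ≤ c (n + 1) := Nat.sInf_le h1
      rcases eq_or_lt_of_le hle with heq | h
      · exact absurd (heq ▸ hcmem (n + 1))
          (fun hmem => hEnotin n (n + 1) (Nat.lt_succ_self n) (c n) (hcE n) hmem)
      · exact h
    have hn : m + 1 ≤ c (m + 1) := hcmono.le_apply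
    have hle : c (m + 1) ≤ m := Nat.sInf_le (hrem (m + 1))
    omega
  have hunion : M = ⋃ n, ((E n : Set ℕ)) := by
    ext x
    constructor
    · intro hx
      obtain ⟨n, hn⟩ := hcov x hx
      exact Set.mem_iUnion.2 ⟨n, hn⟩
    · intro hx
      obtain ⟨n, hn⟩ := Set.mem_iUnion.1 hx
      exact hEsubM n x hn
  refine ⟨E, ⟨hmax, fun n => hblock n (n + 1) (Nat.lt_succ_self n), hunion⟩, ?_,
    fun n => rfl⟩
  rintro E' ⟨hmax', hblock1', hunion'⟩
  have hne' : ∀ n, (E' n).Nonempty := by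
    intro n
    rcases Finset.eq_empty_or_nonempty (E' n) with h | h
    · exfalso
      have h1 : ({1} : Finset ℕ) ∈ SS.S ξ := S_singleton ξ hξ 1 one_pos
      have h2 := (hmax' n).2 {1} h1 (by rw [h]; exact Finset.empty_subset _)
      rw [h] at h2
      exact absurd h2.symm (Finset.singleton_ne_empty 1)
    · exact h
  have hblock' : ∀ i j, i < j → BlockLt (E' i) (E' j) := by
    intro i j hij
    obtain ⟨d, rfl⟩ : ∃ d, j = i + d + 1 := ⟨j - i - 1, by omega⟩
    clear hij
    induction d with
    | zero => exact hblock1' i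
    | succ d ihd =>
      have heq : i + (d + 1) + 1 = (i + d + 1) + 1 := by omega
      rw [heq]
      exact blockLt_trans ihd (hblock1' (i + d + 1)) (hne' (i + d + 1))
  have hsubM' : ∀ n, ∀ x ∈ E' n, x ∈ M := by
    intro n x hx
    rw [hunion']
    exact Set.mem_iUnion.2 ⟨n, hx⟩
  have hkey : ∀ n, E' n = E n := by
    intro n
    induction n using Nat.strong_induction_on with
    | _ n ih =>
      have hsub' : ∀ x ∈ E' n, x ∈ Nrem SS ξ M n := by
        intro x hx
        refine ⟨hsubM' n x hx, fun hcon => ?_⟩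
        obtain ⟨i, hi⟩ := Set.mem_iUnion.1 hcon
        obtain ⟨hin, hxi⟩ := Set.mem_iUnion.1 hi
        have hxi' : x ∈ E i := hxi
        rw [← ih i hin] at hxi'
        exact absurd (hblock' i n hin x hxi' x hx) (lt_irrefl x)
      have hinit' : ∀ a ∈ E' n, ∀ b ∈ Nrem SS ξ M n, b ≤ a → b ∈ E' n := by
        intro a ha b hb hba
        have hbM : b ∈ M := hb.1
        rw [hunion'] at hbM
        obtain ⟨m, hbm⟩ := Set.mem_iUnion.1 hbM
        rcases lt_trichotomy m n with h | rfl | h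
        · exfalso
          rw [ih m h] at hbm
          exact hb.2 (Set.mem_iUnion.2 ⟨m, Set.mem_iUnion.2 ⟨h, hbm⟩⟩)
        · exact hbm
        · exact absurd hba (not_le.2 (hblock' n m h a ha b hbm))
      by_cases hEE : E n ⊆ E' n
      · exact ((hmax n).2 (E' n) (hmax' n).1 hEE).symm
      · obtain ⟨x, hxE, hxE'⟩ := Finset.not_subset.1 hEE
        have hE'E : E' n ⊆ E n := by
          intro y hy
          rcases le_or_gt y x with h | h
          · exact hinit n x hxE y (hsub' y hy) h
          · exact absurd (hinit' y hy x (hsub n hxE) (le_of_lt h)) hxE'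
        exact (hmax' n).2 (E n) (hmax n).1 hE'E
  funext n
  exact hkey n


end SchreierPaper
end
end
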